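/- arXiv:2502.17618 — 8 statements merged into one kernel-verified Lean document; each statement's English description precedes it below -/
import Mathlib

section
/- Let a finite MDP (S, A, T, μ, γ) be given and let ρ : S × A → ℝ satisfy the Bellman flow constraints: ρ(s,a) ≥ 0 for all (s,a), and ∑_{a∈A} ρ(s,a) = μ(s) + γ·∑_{s'∈S, a'∈A} T(s|s',a')·ρ(s',a') for all s ∈ S. Assume ∑_{a∈A} ρ(s,a) > 0 for every s, and define the stationary policy π(a|s) := ρ(s,a) / ∑_{a'∈A} ρ(s,a'). Then ρ is exactly the occupancy measure of π, i.e. ρ_π(s,a) = ρ(s,a) for all (s,a). -/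
/-!
Write `R(s) = ∑_a ρ(s,a)` and let `K(s,s') = ∑_a π(a|s) T(s'|s,a)` be the state transition
matrix of `π`. Since `R(s) π(a|s) = ρ(s,a)`, the flow constraints say `R (1 - γK) = μ` for the
row vector `R`. As `K` is row stochastic, `‖γK‖_∞ ≤ γ < 1`, so the Neumann series `∑ₜ (γK)ᵗ`
inverts `1 - γK` and `R = ∑ₜ γᵗ μKᵗ`. Finally `P_π^t(s,a) = (μKᵗ)(s) π(a|s)`, so
`ρ_π(s,a) = R(s) π(a|s) = ρ(s,a)`.
-/

open scoped BigOperators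

/-- The time-`t` state-action distribution of a stationary policy `π` in a finite MDP
with transition kernel `T` (with `T s a s'` the probability of moving to `s'` from `(s,a)`)
and initial state distribution `μ`:
`P_π^0(s,a) = μ(s)·π(a|s)` and `P_π^{t+1}(s,a) = π(a|s)·∑_{s',a'} T(s|s',a')·P_π^t(s',a')`. -/
noncomputable def stepDist {S A : Type} [Fintype S] [Fintype A]
    (T : S → A → S → ℝ) (μ : S → ℝ) (π : S → A → ℝ) : ℕ → S → A → ℝ
  | 0 => fun s a => μ s * π s a
  | (t + 1) => fun s a => π s a * ∑ s' : S, ∑ a' : A, T s' a' s * stepDist T μ π t s' a'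

/-- The (discounted) occupancy measure of a stationary policy `π`:
`ρ_π(s,a) = ∑_{t=0}^∞ γ^t · P_π^t(s,a)`. -/
noncomputable def occupancy {S A : Type} [Fintype S] [Fintype A]
    (T : S → A → S → ℝ) (μ : S → ℝ) (γ : ℝ) (π : S → A → ℝ) (s : S) (a : A) : ℝ :=
  ∑' t : ℕ, γ ^ t * stepDist T μ π t s a

open Matrix

theorem HasSum.matrix_vecMul {ι m n R : Type*} [Fintype m] [NonUnitalNonAssocSemiring R]
    [TopologicalSpace R] [IsTopologicalSemiring R] {f : ι → Matrix m n R} {a : Matrix m n R}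
    (hf : HasSum f a) (v : m → R) : HasSum (fun i => v ᵥ* f i) (v ᵥ* a) :=
  Pi.hasSum.2 fun j => hasSum_sum fun i _ => (Pi.hasSum.1 (Pi.hasSum.1 hf i) j).mul_left (v i)

namespace Matrix

variable {n : Type*} [Fintype n] [DecidableEq n]

section LinftyOp

attribute [local instance] Matrix.linftyOpNormedAddCommGroup

lemma linfty_opNorm_le_one_of_mem_rowStochastic {M : Matrix n n ℝ}
    (hM : M ∈ rowStochastic ℝ n) : ‖M‖ ≤ 1 := by
  rw [linfty_opNorm_def, NNReal.coe_le_one]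
  refine Finset.sup_le fun i _ => ?_
  rw [← NNReal.coe_le_coe]
  push_cast
  simp [Real.norm_of_nonneg (nonneg_of_mem_rowStochastic hM), sum_row_of_mem_rowStochastic hM]

end LinftyOp

lemma summable_pow_smul_of_mem_rowStochastic {M : Matrix n n ℝ} (hM : M ∈ rowStochastic ℝ n)
    {γ : ℝ} (hγ : |γ| < 1) : Summable fun t : ℕ => (γ • M) ^ t := by
  let := Matrix.linftyOpNormedRing (n := n) (α := ℝ)
  let := Matrix.linftyOpNormedAlgebra (n := n) (α := ℝ) (R := ℝ)
  refine summable_geometric_of_norm_lt_one ?_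
  calc ‖γ • M‖ ≤ ‖γ‖ * ‖M‖ := norm_smul_le _ _
    _ ≤ ‖γ‖ * 1 := by gcongr; exact linfty_opNorm_le_one_of_mem_rowStochastic hM
    _ < 1 := by rwa [mul_one, Real.norm_eq_abs]

lemma hasSum_pow_smul_vecMul_of_vecMul_one_sub_smul {R : Type*} [CommRing R] [TopologicalSpace R]
    [IsTopologicalRing R] [T2Space R] {M : Matrix n n R} {γ : R}
    (hγM : Summable fun t : ℕ => (γ • M) ^ t) {μ ν : n → R} (hν : ν ᵥ* (1 - γ • M) = μ) :
    HasSum (fun t : ℕ => γ ^ t • (μ ᵥ* M ^ t)) ν := by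
  have hresolvent : μ ᵥ* ∑' t : ℕ, (γ • M) ^ t = ν := by
    rw [← hν, vecMul_vecMul, hγM.one_sub_mul_tsum_pow, vecMul_one]
  have h := hγM.hasSum.matrix_vecMul μ
  rw [hresolvent] at h
  simpa only [smul_pow, vecMul_smul] using h

end Matrix

section MDP

variable {S A : Type} [Fintype S] [Fintype A]

noncomputable def policyTransition (T : S → A → S → ℝ) (π : S → A → ℝ) : Matrix S S ℝ :=
  Matrix.of fun s s' => ∑ a, π s a * T s a s'

lemma vecMul_policyTransition (T : S → A → S → ℝ) (π : S → A → ℝ) (ν : S → ℝ) (s : S) :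
    (ν ᵥ* policyTransition T π) s = ∑ s' : S, ∑ a : A, T s' a s * (ν s' * π s' a) := by
  simp only [vecMul, dotProduct, policyTransition, of_apply, Finset.mul_sum]
  exact Finset.sum_congr rfl fun s' _ => Finset.sum_congr rfl fun a _ => by ring

lemma policyTransition_mem_rowStochastic [DecidableEq S] {T : S → A → S → ℝ} {π : S → A → ℝ}
    (hT_nonneg : ∀ s a s', 0 ≤ T s a s') (hT_sum : ∀ s a, ∑ s' : S, T s a s' = 1)
    (hπ_nonneg : ∀ s a, 0 ≤ π s a) (hπ_sum : ∀ s, ∑ a : A, π s a = 1) :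
    policyTransition T π ∈ rowStochastic ℝ S := by
  refine mem_rowStochastic_iff_sum.2 ⟨fun s s' => ?_, fun s => ?_⟩
  · exact Finset.sum_nonneg fun a _ => mul_nonneg (hπ_nonneg s a) (hT_nonneg s a s')
  · simp only [policyTransition, of_apply]
    rw [Finset.sum_comm]
    simp [← Finset.mul_sum, hT_sum, hπ_sum]

lemma stepDist_eq_vecMul_pow [DecidableEq S] (T : S → A → S → ℝ) (μ : S → ℝ)
    (π : S → A → ℝ) (t : ℕ) (s : S) (a : A) :
    stepDist T μ π t s a = (μ ᵥ* policyTransition T π ^ t) s * π s a := by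
  induction t generalizing s a with
  | zero => simp [stepDist]
  | succ t ih =>
    rw [pow_succ, ← vecMul_vecMul, vecMul_policyTransition, stepDist, mul_comm]
    simp only [ih]

lemma occupancy_eq_of_hasSum [DecidableEq S] {T : S → A → S → ℝ} {μ : S → ℝ} {γ : ℝ}
    {π : S → A → ℝ} {ν : S → ℝ}
    (h : HasSum (fun t : ℕ => γ ^ t • (μ ᵥ* policyTransition T π ^ t)) ν) (s : S) (a : A) : occupancy T μ γ π s a = ν s * π s a := by
  simp only [occupancy, stepDist_eq_vecMul_pow, ← mul_assoc]
  exact ((Pi.hasSum.1 h s).mul_right (π s a)).tsum_eq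

end MDP

theorem bellman_flow_is_occupancy_general
    {S A : Type} [Fintype S] [Fintype A]
    (T : S → A → S → ℝ) (μ : S → ℝ) (γ : ℝ)
    (hT_nonneg : ∀ s a s', 0 ≤ T s a s')
    (hT_sum : ∀ s a, ∑ s' : S, T s a s' = 1)
    (hγ0 : 0 ≤ γ) (hγ1 : γ < 1)
    (ρ : S → A → ℝ)
    (hρ_nonneg : ∀ s a, 0 ≤ ρ s a)
    (hρ_flow : ∀ s, ∑ a : A, ρ s a
        = μ s + γ * ∑ s' : S, ∑ a' : A, T s' a' s * ρ s' a')
    (hρ_pos : ∀ s, 0 < ∑ a : A, ρ s a) :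
    ∀ s a, occupancy T μ γ (fun s a => ρ s a / ∑ a' : A, ρ s a') s a = ρ s a := by
  classical
  set R : S → ℝ := fun s => ∑ a : A, ρ s a
  set π : S → A → ℝ := fun s a => ρ s a / R s
  have hRπ : ∀ s a, R s * π s a = ρ s a := fun s a => mul_div_cancel₀ _ (hρ_pos s).ne'
  have hK : policyTransition T π ∈ rowStochastic ℝ S :=
    policyTransition_mem_rowStochastic hT_nonneg hT_sum
      (fun s a => div_nonneg (hρ_nonneg s a) (hρ_pos s).le)
      (fun s => by rw [← Finset.sum_div]; exact div_self (hρ_pos s).ne')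
  have hflow : R ᵥ* (1 - γ • policyTransition T π) = μ := by
    ext s
    simp only [vecMul_sub, vecMul_one, vecMul_smul, Pi.sub_apply, Pi.smul_apply, smul_eq_mul,
      vecMul_policyTransition, hRπ]
    linarith [hρ_flow s]
  have hsum := hasSum_pow_smul_vecMul_of_vecMul_one_sub_smul
    (summable_pow_smul_of_mem_rowStochastic hK (abs_lt.2 ⟨by linarith, hγ1⟩)) hflow
  intro s a
  rw [occupancy_eq_of_hasSum hsum, hRπ]

/-- If `ρ : S × A → ℝ` satisfies the Bellman flow constraints
(`ρ ≥ 0` and `∑_a ρ(s,a) = μ(s) + γ·∑_{s',a'} T(s|s',a')·ρ(s',a')`) and has strictly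
positive state marginals, then `ρ` is exactly the occupancy measure of the stationary policy
`π(a|s) := ρ(s,a) / ∑_{a'} ρ(s,a')`. -/
theorem bellman_flow_is_occupancy
    {S A : Type} [Fintype S] [Nonempty S] [Fintype A] [Nonempty A]
    (T : S → A → S → ℝ) (μ : S → ℝ) (γ : ℝ)
    (hT_nonneg : ∀ s a s', 0 ≤ T s a s')
    (hT_sum : ∀ s a, ∑ s' : S, T s a s' = 1)
    (hμ_nonneg : ∀ s, 0 ≤ μ s) (hμ_sum : ∑ s : S, μ s = 1)
    (hγ0 : 0 ≤ γ) (hγ1 : γ < 1)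
    (ρ : S → A → ℝ)
    (hρ_nonneg : ∀ s a, 0 ≤ ρ s a)
    (hρ_flow : ∀ s, ∑ a : A, ρ s a
        = μ s + γ * ∑ s' : S, ∑ a' : A, T s' a' s * ρ s' a')
    (hρ_pos : ∀ s, 0 < ∑ a : A, ρ s a) :
    ∀ s a, occupancy T μ γ (fun s a => ρ s a / ∑ a' : A, ρ s a') s a = ρ s a :=
  bellman_flow_is_occupancy_general T μ γ hT_nonneg hT_sum hγ0 hγ1 ρ hρ_nonneg hρ_flow hρ_pos
end

section
/- Let a finite MDP (S, A, T, μ, γ) be given and let π be a stationary policy whose occupancy measure ρ_π satisfies ∑_{a∈A} ρ_π(s,a) > 0 for every s ∈ S. Then π is recovered from its occupancy measure via π(a|s) = ρ_π(s,a) / ∑_{a'∈A} ρ_π(s,a'). Consequently, if two stationary policies π and π' have the same occupancy measure and that occupancy measure has strictly positive state marginals, then π = π'. -/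
open scoped BigOperators

/-!
Every time-`t` distribution factors as `P_π^t(s,a) = π(a|s) · p_t(s)`, where `p_t` is the state
marginal at time `t`. Summing the discounted series, `ρ_π(s,a) = π(a|s) · d_π(s)` with `d_π` the
discounted state visitation, and summing over `a` identifies `d_π(s)` with `∑_a ρ_π(s,a)`.
Dividing by this positive quantity recovers `π`, and two policies with the same occupancy
measure are both recovered from it.
-/

section Occupancy

variable {S A : Type} [Fintype S] [Fintype A]
  (T : S → A → S → ℝ) (μ : S → ℝ) (γ : ℝ) (π : S → A → ℝ)

noncomputable def stateDist : ℕ → S → ℝ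
  | 0 => μ
  | (t + 1) => fun s => ∑ s' : S, ∑ a' : A, T s' a' s * stepDist T μ π t s' a'

noncomputable def stateVisitation (s : S) : ℝ :=
  ∑' t : ℕ, γ ^ t * stateDist T μ π t s

theorem stepDist_eq_mul_stateDist (t : ℕ) (s : S) (a : A) :
    stepDist T μ π t s a = π s a * stateDist T μ π t s := by
  cases t with
  | zero => exact mul_comm _ _
  | succ t => rfl

-- `tsum_mul_left` holds in a division ring without summability, so no convergence is needed.
theorem occupancy_eq_mul_stateVisitation (s : S) (a : A) :
    occupancy T μ γ π s a = π s a * stateVisitation T μ γ π s := by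
  simp only [occupancy, stateVisitation, stepDist_eq_mul_stateDist, ← tsum_mul_left]
  congr 1 with t
  ring

variable {π}

theorem sum_occupancy_eq_stateVisitation {s : S} (hπ : ∑ a : A, π s a = 1) :
    ∑ a : A, occupancy T μ γ π s a = stateVisitation T μ γ π s := by
  simp only [occupancy_eq_mul_stateVisitation, ← Finset.sum_mul, hπ, one_mul]

theorem eq_occupancy_div_sum_occupancy {s : S} (hπ : ∑ a : A, π s a = 1)
    (hpos : 0 < ∑ a : A, occupancy T μ γ π s a) (a : A) :
    π s a = occupancy T μ γ π s a / ∑ a' : A, occupancy T μ γ π s a' := by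
  rw [eq_div_iff hpos.ne', sum_occupancy_eq_stateVisitation T μ γ hπ,
    occupancy_eq_mul_stateVisitation]

end Occupancy

theorem policy_recovered_from_occupancy_general
    {S A : Type} [Fintype S] [Fintype A]
    (T : S → A → S → ℝ) (μ : S → ℝ) (γ : ℝ)
    (π : S → A → ℝ)
    (hπ_sum : ∀ s, ∑ a : A, π s a = 1)
    (hpos : ∀ s, 0 < ∑ a : A, occupancy T μ γ π s a) :
    (∀ s a, π s a = occupancy T μ γ π s a / ∑ a' : A, occupancy T μ γ π s a') ∧
    (∀ π' : S → A → ℝ, (∀ s a, 0 ≤ π' s a) → (∀ s, ∑ a : A, π' s a = 1) →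
      (∀ s a, occupancy T μ γ π' s a = occupancy T μ γ π s a) → π' = π) := by
  refine ⟨fun s => eq_occupancy_div_sum_occupancy T μ γ (hπ_sum s) (hpos s), ?_⟩
  intro π' _ hπ'_sum hρ
  have hocc : occupancy T μ γ π' = occupancy T μ γ π := funext₂ hρ
  funext s a
  rw [eq_occupancy_div_sum_occupancy T μ γ (hπ'_sum s) (hocc ▸ hpos s),
    eq_occupancy_div_sum_occupancy T μ γ (hπ_sum s) (hpos s), hocc]

/-- A stationary policy whose occupancy measure has strictly positive
state marginals is recovered from its occupancy measure by
`π(a|s) = ρ_π(s,a) / ∑_{a'} ρ_π(s,a')`; consequently two stationary policies with the same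
such occupancy measure coincide. -/
theorem policy_recovered_from_occupancy
    {S A : Type} [Fintype S] [Nonempty S] [Fintype A] [Nonempty A]
    (T : S → A → S → ℝ) (μ : S → ℝ) (γ : ℝ)
    (hT_nonneg : ∀ s a s', 0 ≤ T s a s')
    (hT_sum : ∀ s a, ∑ s' : S, T s a s' = 1)
    (hμ_nonneg : ∀ s, 0 ≤ μ s) (hμ_sum : ∑ s : S, μ s = 1)
    (hγ0 : 0 ≤ γ) (hγ1 : γ < 1)
    (π : S → A → ℝ)
    (hπ_nonneg : ∀ s a, 0 ≤ π s a) (hπ_sum : ∀ s, ∑ a : A, π s a = 1)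
    (hpos : ∀ s, 0 < ∑ a : A, occupancy T μ γ π s a) :
    (∀ s a, π s a = occupancy T μ γ π s a / ∑ a' : A, occupancy T μ γ π s a') ∧
    (∀ π' : S → A → ℝ, (∀ s a, 0 ≤ π' s a) → (∀ s, ∑ a : A, π' s a = 1) →
      (∀ s a, occupancy T μ γ π' s a = occupancy T μ γ π s a) → π' = π) :=
  policy_recovered_from_occupancy_general T μ γ π hπ_sum hpos
end

section
/- (Theorem 1, bijection.) In a finite Dec-POMDP with hierarchical agent models, fix an agent i and the other agents' models N_{-i}, and let ρ_i be the AMM-occupancy measure induced by agent model N_i = (π_i, Tx_i) together with N_{-i}. Assume the marginals are strictly positive: ρ_i(o,x⁻) := ∑_{a,x} ρ_i(o,a,x,x⁻) > 0 for every (o,x⁻) ∈ Ω_i × (X_i ∪ {#}) and ρ_i(o,x) := ∑_{a,x⁻} ρ_i(o,a,x,x⁻) > 0 for every (o,x) ∈ Ω_i × X_i. Then the agent model is recovered from ρ_i by Tx_i(x|o,x⁻) = (∑_{a} ρ_i(o,a,x,x⁻)) / (∑_{a,x} ρ_i(o,a,x,x⁻)) and π_i(a|o,x) = (∑_{x⁻}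 ρ_i(o,a,x,x⁻)) / (∑_{x⁻,a} ρ_i(o,a,x,x⁻)); moreover, if another agent model N_i' = (π_i', Tx_i'), combined with the same other-agent models N_{-i}, induces the same AMM-occupancy measure ρ_i, then π_i' = π_i and Tx_i' = Tx_i. That is, N_i is the only agent model whose AMM-occupancy measure (given N_{-i}) is ρ_i. -/
open scoped BigOperators
open Classical

/-!
At every time step, given the state, the observations and the previous subtasks, each agent
draws its subtask from `Tx` and then its action from `π`, independently of the other agents.
Summing out the other agents, whose kernels are normalized, factors the occupancy measure as
`ρ_i(o,a,x,x⁻) = m(o,x⁻) · Tx_i(x|o,x⁻) · π_i(a|o,x)`, with `m(o,x⁻)` the discounted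
probability of observing `o` after subtask `x⁻`. Normalization of `Tx_i` and `π_i` identifies
`m(o,x⁻)` and `∑_{x⁻} m(o,x⁻) Tx_i(x|o,x⁻)` as marginals of `ρ_i`, so `Tx_i` and `π_i` are
the stated ratios of marginals. Any other model inducing the same `ρ_i` factors it in the
same way, hence is given by the same ratios.
-/

theorem Fintype.sum_pi_ite_eq_prod {R ι : Type*} [CommSemiring R] [Fintype ι] [DecidableEq ι]
    {Y : ι → Type*} [∀ j, Fintype (Y j)] (g : ∀ j, Y j → R) (i : ι) (y : Y i)
    (hg : ∀ j, j ≠ i → ∑ z, g j z = 1) :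
    ∑ f : ∀ j, Y j, (if f i = y then ∏ j, g j (f j) else 0) = g i y := by
  rw [← Finset.sum_filter, ← Fintype.piFinset_univ (β := Y),
    ← Fintype.piFinset_update_singleton_eq_filter_piFinset_eq (fun j => Finset.univ) i
      (Finset.mem_univ y),
    ← Finset.prod_univ_sum, Finset.prod_eq_single i]
  · simp
  · intro j _ hj
    simp [Function.update_of_ne hj, hg j hj]
  · simp

theorem Fintype.sum_pi_sum_pi_ite_eq_mul {R ι : Type*} [CommSemiring R] [Fintype ι]
    [DecidableEq ι] {X A : ι → Type*} [∀ j, Fintype (X j)] [∀ j, Fintype (A j)]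
    (p : ∀ j, X j → R) (q : ∀ j, X j → A j → R) (i : ι) (z : X i) (b : A i)
    (hp : ∀ j, j ≠ i → ∑ x, p j x = 1) (hq : ∀ j, j ≠ i → ∀ x, ∑ a, q j x a = 1) :
    ∑ x : ∀ j, X j, ∑ a : ∀ j, A j,
      (if a i = b ∧ x i = z then (∏ j, p j (x j)) * ∏ j, q j (x j) (a j) else 0)
      = p i z * q i z b := by
  have hinner : ∀ x : ∀ j, X j, ∑ a : ∀ j, A j,
      (if a i = b ∧ x i = z then (∏ j, p j (x j)) * ∏ j, q j (x j) (a j) else 0)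
        = (if x i = z then ∏ j, p j (x j) else 0) * q i z b := by
    intro x
    by_cases hx : x i = z
    · simp only [hx, and_true, if_true, ← mul_ite_zero, ← Finset.mul_sum]
      rw [Fintype.sum_pi_ite_eq_prod _ i b fun j hj => hq j hj (x j), hx]
    · simp [hx]
  simp only [hinner, ← Finset.sum_mul, Fintype.sum_pi_ite_eq_prod p i z hp]

section Recovery

variable {K O A X Xp : Type*} [Semifield K] {ρ : O → A → X → Xp → K} {m : O → Xp → K}
  {p : O → Xp → X → K} {q : O → X → A → K}

theorem factor_mid_eq_sum_div [Fintype A] [Fintype X]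
    (hρ : ∀ o a x xp, ρ o a x xp = m o xp * (p o xp x * q o x a))
    (hp : ∀ o xp, ∑ x, p o xp x = 1) (hq : ∀ o x, ∑ a, q o x a = 1) {o : O} {xp : Xp}
    (h : ∑ a, ∑ x', ρ o a x' xp ≠ 0) (x : X) :
    p o xp x = (∑ a, ρ o a x xp) / ∑ a, ∑ x', ρ o a x' xp := by
  have hsum_a : ∀ x, ∑ a, ρ o a x xp = m o xp * p o xp x := fun x => by
    simp only [hρ, ← Finset.mul_sum, hq, mul_one]
  have hsum : ∑ a, ∑ x', ρ o a x' xp = m o xp := by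
    rw [Finset.sum_comm]
    simp only [hsum_a, ← Finset.mul_sum, hp, mul_one]
  rw [hsum] at h ⊢
  rw [hsum_a, mul_div_cancel_left₀ _ h]

theorem factor_last_eq_sum_div [Fintype A] [Fintype Xp]
    (hρ : ∀ o a x xp, ρ o a x xp = m o xp * (p o xp x * q o x a))
    (hq : ∀ o x, ∑ a, q o x a = 1) {o : O} {x : X}
    (h : ∑ xp, ∑ a', ρ o a' x xp ≠ 0) (a : A) :
    q o x a = (∑ xp, ρ o a x xp) / ∑ xp, ∑ a', ρ o a' x xp := by
  have hsum_xp : ∀ a, ∑ xp, ρ o a x xp = (∑ xp, m o xp * p o xp x) * q o x a := fun a => by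
    simp only [hρ, Finset.sum_mul, mul_assoc]
  have hsum : ∑ xp, ∑ a', ρ o a' x xp = ∑ xp, m o xp * p o xp x := by
    rw [Finset.sum_comm]
    simp only [hsum_xp, ← Finset.mul_sum, hq, mul_one]
  rw [hsum] at h ⊢
  rw [hsum_xp, mul_div_cancel_left₀ _ h]

end Recovery

section DecPOMDP

variable {n : ℕ} {S : Type} {A : Fin n → Type} {Ω : Fin n → Type} {X : Fin n → Type}

/-- The time-`t` joint distribution of the Dec-POMDP process with hierarchical agent
models, over tuples `(s^t, o^t, x^{t-1}, x^t, a^t)`; here `x^{-1} := #` is modelled by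
`none`, as is the absent previous joint action at time `0`. The process is:
`s⁰ ~ μ0`, `o_i⁰ = O_i(s⁰,#)`, `x_i⁰ ~ Tx_i(·|o_i⁰,#)`, `a_i⁰ ~ π_i(·|o_i⁰,x_i⁰)`;
and for `t ≥ 0`, `s^{t+1} ~ T(·|s^t,a^t)`, `o_i^{t+1} = O_i(s^{t+1},a^t)`,
`x_i^{t+1} ~ Tx_i(·|o_i^{t+1},x_i^t)`, `a_i^{t+1} ~ π_i(·|o_i^{t+1},x_i^{t+1})`,
independently across agents. -/
noncomputable def jointDist [Fintype S] [∀ i, Fintype (A i)] [∀ i, Fintype (Ω i)]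
    [∀ i, Fintype (X i)]
    (T : S → (∀ i, A i) → S → ℝ) (μ0 : S → ℝ)
    (Obs : ∀ i, S → Option (∀ j, A j) → Ω i)
    (π : ∀ i, Ω i → X i → A i → ℝ)
    (Tx : ∀ i, Ω i → Option (X i) → X i → ℝ) :
    ℕ → S → (∀ i, Ω i) → (∀ i, Option (X i)) → (∀ i, X i) → (∀ i, A i) → ℝ
  | 0, s, o, xp, x, a =>
      (μ0 s *
        (if (∀ i, o i = Obs i s none) ∧ xp = (fun _ => none) then (1 : ℝ) else 0)) *
      ((∏ i, Tx i (o i) (xp i) (x i)) * ∏ i, π i (o i) (x i) (a i))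
  | (t + 1), s', o', xp', x', a' =>
      (∑ s : S, ∑ o : (∀ i, Ω i), ∑ xp : (∀ i, Option (X i)), ∑ x : (∀ i, X i),
        ∑ a : (∀ i, A i),
          jointDist T μ0 Obs π Tx t s o xp x a * T s a s' *
            (if (∀ i, o' i = Obs i s' (some a)) ∧ xp' = (fun i => some (x i))
              then (1 : ℝ) else 0)) *
      ((∏ i, Tx i (o' i) (xp' i) (x' i)) * ∏ i, π i (o' i) (x' i) (a' i))

/-- The AMM-occupancy measure of agent `i`:
`ρ_i(o,a,x,x⁻) := ∑_{t=0}^∞ γ^t · P(o_i^t = o, a_i^t = a, x_i^t = x, x_i^{t-1} = x⁻)`,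
with the convention `x_i^{-1} := #` (modelled by `none`). -/
noncomputable def occAMM [Fintype S] [∀ i, Fintype (A i)] [∀ i, Fintype (Ω i)]
    [∀ i, Fintype (X i)]
    (T : S → (∀ i, A i) → S → ℝ) (μ0 : S → ℝ)
    (Obs : ∀ i, S → Option (∀ j, A j) → Ω i) (γ : ℝ)
    (π : ∀ i, Ω i → X i → A i → ℝ)
    (Tx : ∀ i, Ω i → Option (X i) → X i → ℝ)
    (i : Fin n) (o : Ω i) (a : A i) (x : X i) (xp : Option (X i)) : ℝ :=
  ∑' t : ℕ,
    γ ^ t *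
      (∑ s : S, ∑ oj : (∀ j, Ω j), ∑ xpj : (∀ j, Option (X j)), ∑ xj : (∀ j, X j),
        ∑ aj : (∀ j, A j),
          if oj i = o ∧ aj i = a ∧ xj i = x ∧ xpj i = xp
            then jointDist T μ0 Obs π Tx t s oj xpj xj aj else 0)

variable [Fintype S] [∀ i, Fintype (A i)] [∀ i, Fintype (Ω i)] [∀ i, Fintype (X i)]
  (T : S → (∀ i, A i) → S → ℝ) (μ0 : S → ℝ) (Obs : ∀ i, S → Option (∀ j, A j) → Ω i)
  (π : ∀ i, Ω i → X i → A i → ℝ) (Tx : ∀ i, Ω i → Option (X i) → X i → ℝ)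

theorem jointDist_eq_mul_prod (t : ℕ) :
    ∃ w : S → (∀ i, Ω i) → (∀ i, Option (X i)) → ℝ, ∀ s o xp x a,
      jointDist T μ0 Obs π Tx t s o xp x a
        = w s o xp * ((∏ i, Tx i (o i) (xp i) (x i)) * ∏ i, π i (o i) (x i) (a i)) := by
  cases t <;> exact ⟨_, fun _ _ _ _ _ => rfl⟩

theorem sum_ite_jointDist_eq_mul (i : Fin n)
    (hπ : ∀ j, j ≠ i → ∀ o x, ∑ a, π j o x a = 1)
    (hTx : ∀ j, j ≠ i → ∀ o xp, ∑ x, Tx j o xp x = 1) (t : ℕ) :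
    ∃ c : Ω i → Option (X i) → ℝ, ∀ o a x xp,
      (∑ s : S, ∑ oj : (∀ j, Ω j), ∑ xpj : (∀ j, Option (X j)), ∑ xj : (∀ j, X j),
        ∑ aj : (∀ j, A j),
          if oj i = o ∧ aj i = a ∧ xj i = x ∧ xpj i = xp
            then jointDist T μ0 Obs π Tx t s oj xpj xj aj else 0)
        = c o xp * (Tx i o xp x * π i o x a) := by
  obtain ⟨w, hw⟩ := jointDist_eq_mul_prod T μ0 Obs π Tx t
  refine ⟨fun o xp => ∑ s, ∑ oj : (∀ j, Ω j), ∑ xpj : (∀ j, Option (X j)),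
    if oj i = o ∧ xpj i = xp then w s oj xpj else 0, fun o a x xp => ?_⟩
  simp only [Finset.sum_mul]
  refine Finset.sum_congr rfl fun s _ => Finset.sum_congr rfl fun oj _ =>
    Finset.sum_congr rfl fun xpj _ => ?_
  by_cases h : oj i = o ∧ xpj i = xp
  · obtain ⟨rfl, rfl⟩ := h
    have hmarg := Fintype.sum_pi_sum_pi_ite_eq_mul (fun j => Tx j (oj j) (xpj j))
      (fun j => π j (oj j)) i x a (fun j hj => hTx j hj _ _) (fun j hj => hπ j hj _)
    simp only [true_and, and_true, if_true, hw, ← hmarg, Finset.mul_sum, mul_ite_zero]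
  · rw [if_neg h, zero_mul]
    exact Finset.sum_eq_zero fun xj _ => Finset.sum_eq_zero fun aj _ => if_neg (by tauto)

theorem occAMM_eq_mul (γ : ℝ) (i : Fin n)
    (hπ : ∀ j, j ≠ i → ∀ o x, ∑ a, π j o x a = 1)
    (hTx : ∀ j, j ≠ i → ∀ o xp, ∑ x, Tx j o xp x = 1) :
    ∃ m : Ω i → Option (X i) → ℝ, ∀ o a x xp,
      occAMM T μ0 Obs γ π Tx i o a x xp = m o xp * (Tx i o xp x * π i o x a) := by
  choose c hc using sum_ite_jointDist_eq_mul T μ0 Obs π Tx i hπ hTx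
  exact ⟨fun o xp => ∑' t, γ ^ t * c t o xp, fun o a x xp => by
    simp only [occAMM, hc, ← tsum_mul_right, mul_assoc]⟩

end DecPOMDP

theorem occAMM_bijection_general
    {n : ℕ} {S : Type} {A : Fin n → Type} {Ω : Fin n → Type} {X : Fin n → Type}
    [Fintype S]
    [∀ i, Fintype (A i)]
    [∀ i, Fintype (Ω i)]
    [∀ i, Fintype (X i)]
    (T : S → (∀ i, A i) → S → ℝ) (μ0 : S → ℝ)
    (Obs : ∀ i, S → Option (∀ j, A j) → Ω i) (γ : ℝ)
    (π : ∀ i, Ω i → X i → A i → ℝ)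
    (Tx : ∀ i, Ω i → Option (X i) → X i → ℝ)
    (hπ_sum : ∀ i o x, ∑ a : A i, π i o x a = 1)
    (hTx_sum : ∀ i o xp, ∑ x : X i, Tx i o xp x = 1)
    (i : Fin n)
    (hpos_oxp : ∀ (o : Ω i) (xp : Option (X i)),
      0 < ∑ a : A i, ∑ x : X i, occAMM T μ0 Obs γ π Tx i o a x xp)
    (hpos_ox : ∀ (o : Ω i) (x : X i),
      0 < ∑ a : A i, ∑ xp : Option (X i), occAMM T μ0 Obs γ π Tx i o a x xp) :
    (∀ (o : Ω i) (x : X i) (xp : Option (X i)),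
      Tx i o xp x
        = (∑ a : A i, occAMM T μ0 Obs γ π Tx i o a x xp) /
            (∑ a : A i, ∑ x' : X i, occAMM T μ0 Obs γ π Tx i o a x' xp)) ∧
    (∀ (o : Ω i) (x : X i) (a : A i),
      π i o x a
        = (∑ xp : Option (X i), occAMM T μ0 Obs γ π Tx i o a x xp) /
            (∑ xp : Option (X i), ∑ a' : A i, occAMM T μ0 Obs γ π Tx i o a' x xp)) ∧
    (∀ (π' : ∀ j, Ω j → X j → A j → ℝ) (Tx' : ∀ j, Ω j → Option (X j) → X j → ℝ),
      (∀ j o x a, 0 ≤ π' j o x a) → (∀ j o x, ∑ a : A j, π' j o x a = 1) →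
      (∀ j o xp x, 0 ≤ Tx' j o xp x) → (∀ j o xp, ∑ x : X j, Tx' j o xp x = 1) →
      (∀ j, j ≠ i → π' j = π j ∧ Tx' j = Tx j) →
      (∀ (o : Ω i) (a : A i) (x : X i) (xp : Option (X i)),
        occAMM T μ0 Obs γ π' Tx' i o a x xp = occAMM T μ0 Obs γ π Tx i o a x xp) →
      π' i = π i ∧ Tx' i = Tx i) := by
  obtain ⟨m, hm⟩ :=
    occAMM_eq_mul T μ0 Obs π Tx γ i (fun j _ => hπ_sum j) (fun j _ => hTx_sum j)
  have hTx_eq : ∀ o x xp, Tx i o xp x = _ := fun o x xp =>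
    factor_mid_eq_sum_div hm (hTx_sum i) (hπ_sum i) (hpos_oxp o xp).ne' x
  have hden_ox : ∀ o x,
      ∑ xp : Option (X i), ∑ a : A i, occAMM T μ0 Obs γ π Tx i o a x xp ≠ 0 := fun o x => by
    rw [Finset.sum_comm]; exact (hpos_ox o x).ne'
  have hπ_eq : ∀ o x a, π i o x a = _ := fun o x a =>
    factor_last_eq_sum_div hm (hπ_sum i) (hden_ox o x) a
  refine ⟨hTx_eq, hπ_eq, fun π' Tx' _ hπ'_sum _ hTx'_sum _ hocc => ?_⟩
  obtain ⟨m', hm'⟩ :=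
    occAMM_eq_mul T μ0 Obs π' Tx' γ i (fun j _ => hπ'_sum j) (fun j _ => hTx'_sum j)
  have hρ' : ∀ o a x xp,
      occAMM T μ0 Obs γ π Tx i o a x xp = m' o xp * (Tx' i o xp x * π' i o x a) :=
    fun o a x xp => (hocc o a x xp).symm.trans (hm' o a x xp)
  refine ⟨funext fun o => funext fun x => funext fun a => ?_,
    funext fun o => funext fun xp => funext fun x => ?_⟩
  · rw [hπ_eq]
    exact factor_last_eq_sum_div hρ' (hπ'_sum i) (hden_ox o x) a
  · rw [hTx_eq]
    exact factor_mid_eq_sum_div hρ' (hTx'_sum i) (hπ'_sum i) (hpos_oxp o xp).ne' x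

/-- **Theorem 1, bijection.** Fix an agent `i` and the other agents' models.
Let `ρ_i` be the AMM-occupancy measure induced by agent model `N_i = (π_i, Tx_i)` together
with the other agents' models, and assume its marginals `ρ_i(o,x⁻)` and `ρ_i(o,x)` are
strictly positive. Then `Tx_i` and `π_i` are recovered from `ρ_i` by
`Tx_i(x|o,x⁻) = ∑_a ρ_i(o,a,x,x⁻) / ∑_{a,x} ρ_i(o,a,x,x⁻)` and
`π_i(a|o,x) = ∑_{x⁻} ρ_i(o,a,x,x⁻) / ∑_{x⁻,a} ρ_i(o,a,x,x⁻)`; moreover any other agent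
model `(π_i', Tx_i')` which, combined with the same other-agent models, induces the same
AMM-occupancy measure satisfies `π_i' = π_i` and `Tx_i' = Tx_i`. -/
theorem occAMM_bijection
    {n : ℕ} {S : Type} {A : Fin n → Type} {Ω : Fin n → Type} {X : Fin n → Type}
    [Fintype S] [Nonempty S]
    [∀ i, Fintype (A i)] [∀ i, Nonempty (A i)]
    [∀ i, Fintype (Ω i)] [∀ i, Nonempty (Ω i)]
    [∀ i, Fintype (X i)] [∀ i, Nonempty (X i)]
    (T : S → (∀ i, A i) → S → ℝ) (μ0 : S → ℝ)
    (Obs : ∀ i, S → Option (∀ j, A j) → Ω i) (γ : ℝ)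
    (π : ∀ i, Ω i → X i → A i → ℝ)
    (Tx : ∀ i, Ω i → Option (X i) → X i → ℝ)
    (hT_nonneg : ∀ s a s', 0 ≤ T s a s') (hT_sum : ∀ s a, ∑ s' : S, T s a s' = 1)
    (hμ0_nonneg : ∀ s, 0 ≤ μ0 s) (hμ0_sum : ∑ s : S, μ0 s = 1)
    (hγ0 : 0 < γ) (hγ1 : γ < 1)
    (hπ_nonneg : ∀ i o x a, 0 ≤ π i o x a)
    (hπ_sum : ∀ i o x, ∑ a : A i, π i o x a = 1)
    (hTx_nonneg : ∀ i o xp x, 0 ≤ Tx i o xp x)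
    (hTx_sum : ∀ i o xp, ∑ x : X i, Tx i o xp x = 1)
    (i : Fin n)
    (hpos_oxp : ∀ (o : Ω i) (xp : Option (X i)),
      0 < ∑ a : A i, ∑ x : X i, occAMM T μ0 Obs γ π Tx i o a x xp)
    (hpos_ox : ∀ (o : Ω i) (x : X i),
      0 < ∑ a : A i, ∑ xp : Option (X i), occAMM T μ0 Obs γ π Tx i o a x xp) :
    (∀ (o : Ω i) (x : X i) (xp : Option (X i)),
      Tx i o xp x
        = (∑ a : A i, occAMM T μ0 Obs γ π Tx i o a x xp) /
            (∑ a : A i, ∑ x' : X i, occAMM T μ0 Obs γ π Tx i o a x' xp)) ∧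
    (∀ (o : Ω i) (x : X i) (a : A i),
      π i o x a
        = (∑ xp : Option (X i), occAMM T μ0 Obs γ π Tx i o a x xp) /
            (∑ xp : Option (X i), ∑ a' : A i, occAMM T μ0 Obs γ π Tx i o a' x xp)) ∧
    (∀ (π' : ∀ j, Ω j → X j → A j → ℝ) (Tx' : ∀ j, Ω j → Option (X j) → X j → ℝ),
      (∀ j o x a, 0 ≤ π' j o x a) → (∀ j o x, ∑ a : A j, π' j o x a = 1) →
      (∀ j o xp x, 0 ≤ Tx' j o xp x) → (∀ j o xp, ∑ x : X j, Tx' j o xp x = 1) →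
      (∀ j, j ≠ i → π' j = π j ∧ Tx' j = Tx j) →
      (∀ (o : Ω i) (a : A i) (x : X i) (xp : Option (X i)),
        occAMM T μ0 Obs γ π' Tx' i o a x xp = occAMM T μ0 Obs γ π Tx i o a x xp) →
      π' i = π i ∧ Tx' i = Tx i) :=
  occAMM_bijection_general T μ0 Obs γ π Tx hπ_sum hTx_sum i hpos_oxp hpos_ox
end

section
/- (Factorization lemma for the factored objective.) In a finite Dec-POMDP with hierarchical agent models, let N = (π_i, Tx_i)_{i=1..n} and N' = (π_i', Tx_i')_{i=1..n} be two joint agent models with AMM-occupancy measures ρ_i and ρ_i' respectively (each agent's occupancy measure induced by its own model together with the remaining models from the same joint model). Define for each agent i the π-occupancy measure ρ_i(o,a,x) := ∑_{x⁻} ρ_i(o,a,x,x⁻) and the Tx-occupancy measure ρ_i(o,x,x⁻) := ∑_a ρ_i(o,a,x,x⁻), and similarly for ρ_i'. Assume the marginals ρ_i(o,x⁻), ρ_i(o,x), ρ_i'(o,x⁻), ρ_i'(o,x) are strictly positive for all agents i and all arguments. Then the following are equivalent: (1) ρ_i(o,a,x) = ρ_i'(o,a,x) and ρ_i(o,x,x⁻)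 = ρ_i'(o,x,x⁻) for all i and all arguments; (2) ρ_i(o,a,x,x⁻) = ρ_i'(o,a,x,x⁻) for all i and all arguments. Moreover, under either condition, π_i = π_i' and Tx_i = Tx_i' for all i. -/
/-!
Conditionally on the prefix `(s^t, o^t, x^{t-1})`, the current subtasks and actions are drawn
independently, so the time-`t` law is the prefix weight times `∏ Tx_j` times `∏ π_j`. Summing out
the other agents (each factor is a probability vector) gives the factorization
`ρ_i(o,a,x,x⁻) = π_i(a|o,x) · Tx_i(x|o,x⁻) · w_i(o,x⁻)`. Then `w_i = ρ_i(o,x⁻)`,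
`ρ_i(o,x,x⁻) = Tx_i · w_i` and `ρ_i(o,a,x) = π_i · ρ_i(o,x)`, so matching the two partial
marginals, and dividing by the positive marginals, recovers `w_i`, then `Tx_i`, then `π_i`,
and hence the whole of `ρ_i`.
-/

open scoped BigOperators
open Classical

section DecPOMDP

variable {n : ℕ} {S : Type} {A : Fin n → Type} {Ω : Fin n → Type} {X : Fin n → Type}

theorem Fintype.sum_pi_ite_prod_of_sum_eq_one {R ι : Type*} [CommSemiring R] [Fintype ι]
    [DecidableEq ι] {Y : ι → Type*} [∀ j, Fintype (Y j)] [∀ j, DecidableEq (Y j)]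
    (f : ∀ j, Y j → R) (hf : ∀ j, ∑ y, f j y = 1) (i : ι) (x : Y i) :
    ∑ g : ∀ j, Y j, (if g i = x then ∏ j, f j (g j) else 0) = f i x := by
  set F := Function.update f i (fun y => if y = x then f i y else 0)
  have hFj : ∀ j ≠ i, F j = f j := fun j hj => Function.update_of_ne hj _ _
  have hF : ∀ g : ∀ j, Y j, (if g i = x then ∏ j, f j (g j) else 0) = ∏ j, F j (g j) := by
    intro g
    have hrest : ∏ j ∈ Finset.univ.erase i, F j (g j) = ∏ j ∈ Finset.univ.erase i, f j (g j) :=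
      Finset.prod_congr rfl fun j hj => by rw [hFj j (Finset.ne_of_mem_erase hj)]
    rw [← Finset.mul_prod_erase _ (fun j => f j (g j)) (Finset.mem_univ i),
      ← Finset.mul_prod_erase _ (fun j => F j (g j)) (Finset.mem_univ i), hrest]
    split_ifs with hg <;> simp [F, hg]
  rw [Finset.sum_congr rfl fun g _ => hF g, ← Fintype.prod_sum,
    Finset.prod_eq_single i (fun j _ hj => by rw [hFj j hj, hf j]) (by simp)]
  simp [F]

structure IsOccupancyFactorization {O Act Sub Prev : Type*} [Fintype Act] [Fintype Sub]
    (ρ : O → Act → Sub → Prev → ℝ) (π : O → Sub → Act → ℝ) (τ : O → Prev → Sub → ℝ)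
    (w : O → Prev → ℝ) : Prop where
  sum_policy : ∀ o x, ∑ a, π o x a = 1
  sum_subtask : ∀ o p, ∑ x, τ o p x = 1
  eq_mul : ∀ o a x p, ρ o a x p = π o x a * τ o p x * w o p

namespace IsOccupancyFactorization

variable {O Act Sub Prev : Type*} [Fintype Act] [Fintype Sub]
  {ρ ρ' : O → Act → Sub → Prev → ℝ} {π π' : O → Sub → Act → ℝ} {τ τ' : O → Prev → Sub → ℝ}
  {w w' : O → Prev → ℝ}

theorem sum_act (h : IsOccupancyFactorization ρ π τ w) (o : O) (x : Sub) (p : Prev) :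
    ∑ a, ρ o a x p = τ o p x * w o p := by
  simp only [h.eq_mul, ← Finset.sum_mul, h.sum_policy, one_mul]

theorem sum_act_sub (h : IsOccupancyFactorization ρ π τ w) (o : O) (p : Prev) :
    ∑ a, ∑ x, ρ o a x p = w o p := by
  rw [Finset.sum_comm]
  simp only [h.sum_act, ← Finset.sum_mul, h.sum_subtask, one_mul]

theorem sum_prev [Fintype Prev] (h : IsOccupancyFactorization ρ π τ w) (o : O) (a : Act)
    (x : Sub) :
    ∑ p, ρ o a x p = π o x a * ∑ p, τ o p x * w o p := by
  simp only [h.eq_mul, mul_assoc, Finset.mul_sum]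

theorem sum_act_prev [Fintype Prev] (h : IsOccupancyFactorization ρ π τ w) (o : O) (x : Sub) :
    ∑ a, ∑ p, ρ o a x p = ∑ p, τ o p x * w o p := by
  simp only [h.sum_prev, ← Finset.sum_mul, h.sum_policy, one_mul]

theorem eq_of_marginals_eq [Fintype Prev] (h : IsOccupancyFactorization ρ π τ w)
    (h' : IsOccupancyFactorization ρ' π' τ' w')
    (hpos_prev : ∀ o p, 0 < ∑ a, ∑ x, ρ o a x p) (hpos_sub : ∀ o x, 0 < ∑ a, ∑ p, ρ o a x p)
    (hprev : ∀ o a x, ∑ p, ρ o a x p = ∑ p, ρ' o a x p)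
    (hact : ∀ o x p, ∑ a, ρ o a x p = ∑ a, ρ' o a x p) :
    π = π' ∧ τ = τ' ∧ w = w' := by
  have hw : w = w' := funext₂ fun o p => by
    rw [← h.sum_act_sub, ← h'.sum_act_sub, Finset.sum_comm, Finset.sum_comm (γ := Act)]
    exact Finset.sum_congr rfl fun x _ => hact o x p
  have hτ : τ = τ' := funext₃ fun o p x => by
    have := hact o x p
    rw [h.sum_act, h'.sum_act, ← hw] at this
    exact mul_right_cancel₀ (h.sum_act_sub o p ▸ hpos_prev o p).ne' this
  have hπ : π = π' := funext₃ fun o x a => by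
    have := hprev o a x
    rw [h.sum_prev, h'.sum_prev, ← hτ, ← hw] at this
    exact mul_right_cancel₀ (h.sum_act_prev o x ▸ hpos_sub o x).ne' this
  exact ⟨hπ, hτ, hw⟩

end IsOccupancyFactorization

variable [Fintype S] [∀ i, Fintype (A i)] [∀ i, Fintype (Ω i)] [∀ i, Fintype (X i)]
  (T : S → (∀ i, A i) → S → ℝ) (μ0 : S → ℝ) (Obs : ∀ i, S → Option (∀ j, A j) → Ω i) (γ : ℝ)
  (π : ∀ i, Ω i → X i → A i → ℝ) (Tx : ∀ i, Ω i → Option (X i) → X i → ℝ)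

/-- The weight of `(s^t, o^t, x^{t-1})` in `jointDist`, before `x^t` and `a^t` are drawn. -/
noncomputable def preDist : ℕ → S → (∀ i, Ω i) → (∀ i, Option (X i)) → ℝ
  | 0, s, o, xp =>
      μ0 s * (if (∀ i, o i = Obs i s none) ∧ xp = (fun _ => none) then (1 : ℝ) else 0)
  | (t + 1), s', o', xp' =>
      ∑ s : S, ∑ o : (∀ i, Ω i), ∑ xp : (∀ i, Option (X i)), ∑ x : (∀ i, X i),
        ∑ a : (∀ i, A i),
          jointDist T μ0 Obs π Tx t s o xp x a * T s a s' *
            (if (∀ i, o' i = Obs i s' (some a)) ∧ xp' = (fun i => some (x i))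
              then (1 : ℝ) else 0)

theorem jointDist_eq_preDist_mul (t : ℕ) (s : S) (o : ∀ i, Ω i) (xp : ∀ i, Option (X i))
    (x : ∀ i, X i) (a : ∀ i, A i) :
    jointDist T μ0 Obs π Tx t s o xp x a
      = preDist T μ0 Obs π Tx t s o xp *
          ((∏ i, Tx i (o i) (xp i) (x i)) * ∏ i, π i (o i) (x i) (a i)) := by
  cases t <;> rfl

/-- The marginal `ρ_i(o, x⁻)` (by `IsOccupancyFactorization.sum_act_sub`), written through
`preDist`. -/
noncomputable def occPrev (i : Fin n) (o : Ω i) (xp : Option (X i)) : ℝ :=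
  ∑' t : ℕ, γ ^ t *
    ∑ s : S, ∑ oj : (∀ j, Ω j), ∑ xpj : (∀ j, Option (X j)),
      if oj i = o ∧ xpj i = xp then preDist T μ0 Obs π Tx t s oj xpj else 0

variable {π Tx}

theorem sum_sub_act_jointDist (hπ : ∀ i o x, ∑ a : A i, π i o x a = 1)
    (hTx : ∀ i o xp, ∑ x : X i, Tx i o xp x = 1) (t : ℕ) (s : S) (oj : ∀ j, Ω j)
    (xpj : ∀ j, Option (X j)) (i : Fin n) (o : Ω i) (a : A i) (x : X i) (xp : Option (X i)) :
    ∑ xj : (∀ j, X j), ∑ aj : (∀ j, A j),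
        (if oj i = o ∧ aj i = a ∧ xj i = x ∧ xpj i = xp
          then jointDist T μ0 Obs π Tx t s oj xpj xj aj else 0)
      = π i o x a * Tx i o xp x *
          if oj i = o ∧ xpj i = xp then preDist T μ0 Obs π Tx t s oj xpj else 0 := by
  by_cases hc : oj i = o ∧ xpj i = xp
  · have hsplit : ∀ (xj : ∀ j, X j) (aj : ∀ j, A j),
        (if oj i = o ∧ aj i = a ∧ xj i = x ∧ xpj i = xp
          then jointDist T μ0 Obs π Tx t s oj xpj xj aj else 0)
        = preDist T μ0 Obs π Tx t s oj xpj *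
            ((if xj i = x then ∏ j, Tx j (oj j) (xpj j) (xj j) else 0) *
              if aj i = a then ∏ j, π j (oj j) (xj j) (aj j) else 0) := by
      intro xj aj
      rw [jointDist_eq_preDist_mul]
      by_cases hx : xj i = x <;> by_cases ha : aj i = a <;> simp [hc, hx, ha]
    have hact : ∀ xj : ∀ j, X j,
        ∑ aj : (∀ j, A j), (if aj i = a then ∏ j, π j (oj j) (xj j) (aj j) else 0)
          = π i (oj i) (xj i) a :=
      fun xj => Fintype.sum_pi_ite_prod_of_sum_eq_one _ (fun j => hπ j _ _) i a
    have hpin : ∀ xj : ∀ j, X j,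
        (if xj i = x then ∏ j, Tx j (oj j) (xpj j) (xj j) else 0) * π i (oj i) (xj i) a
          = (if xj i = x then ∏ j, Tx j (oj j) (xpj j) (xj j) else 0) * π i o x a := by
      intro xj
      split_ifs with hx <;> simp [hc.1, hx]
    simp_rw [hsplit, ← Finset.mul_sum, hact, hpin, ← Finset.sum_mul,
      Fintype.sum_pi_ite_prod_of_sum_eq_one _ (fun j => hTx j _ _) i x, if_pos hc, hc.1, hc.2]
    ring
  · rw [if_neg hc, mul_zero]
    refine Finset.sum_eq_zero fun xj _ => Finset.sum_eq_zero fun aj _ => if_neg ?_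
    exact fun h => hc ⟨h.1, h.2.2.2⟩

theorem occAMM_isOccupancyFactorization (hπ : ∀ i o x, ∑ a : A i, π i o x a = 1)
    (hTx : ∀ i o xp, ∑ x : X i, Tx i o xp x = 1) (i : Fin n) :
    IsOccupancyFactorization (occAMM T μ0 Obs γ π Tx i) (π i) (Tx i)
      (occPrev T μ0 Obs γ π Tx i) where
  sum_policy := hπ i
  sum_subtask := hTx i
  eq_mul o a x xp := by
    rw [occAMM, occPrev, ← tsum_mul_left]
    refine tsum_congr fun t => ?_
    simp only [sum_sub_act_jointDist T μ0 Obs hπ hTx, ← Finset.mul_sum]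
    ring

theorem occAMM_factored_matching_general
    {n : ℕ} {S : Type} {A : Fin n → Type} {Ω : Fin n → Type} {X : Fin n → Type}
    [Fintype S] [∀ i, Fintype (A i)] [∀ i, Fintype (Ω i)] [∀ i, Fintype (X i)]
    (T : S → (∀ i, A i) → S → ℝ) (μ0 : S → ℝ)
    (Obs : ∀ i, S → Option (∀ j, A j) → Ω i) (γ : ℝ)
    (π π' : ∀ i, Ω i → X i → A i → ℝ)
    (Tx Tx' : ∀ i, Ω i → Option (X i) → X i → ℝ)
    (hπ_sum : ∀ i o x, ∑ a : A i, π i o x a = 1)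
    (hTx_sum : ∀ i o xp, ∑ x : X i, Tx i o xp x = 1)
    (hπ'_sum : ∀ i o x, ∑ a : A i, π' i o x a = 1)
    (hTx'_sum : ∀ i o xp, ∑ x : X i, Tx' i o xp x = 1)
    (hpos_oxp : ∀ (i : Fin n) (o : Ω i) (xp : Option (X i)),
      0 < ∑ a : A i, ∑ x : X i, occAMM T μ0 Obs γ π Tx i o a x xp)
    (hpos_ox : ∀ (i : Fin n) (o : Ω i) (x : X i),
      0 < ∑ a : A i, ∑ xp : Option (X i), occAMM T μ0 Obs γ π Tx i o a x xp) :
    (((∀ (i : Fin n) (o : Ω i) (a : A i) (x : X i),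
        (∑ xp : Option (X i), occAMM T μ0 Obs γ π Tx i o a x xp)
          = ∑ xp : Option (X i), occAMM T μ0 Obs γ π' Tx' i o a x xp) ∧
      (∀ (i : Fin n) (o : Ω i) (x : X i) (xp : Option (X i)),
        (∑ a : A i, occAMM T μ0 Obs γ π Tx i o a x xp)
          = ∑ a : A i, occAMM T μ0 Obs γ π' Tx' i o a x xp))
      ↔
      (∀ (i : Fin n) (o : Ω i) (a : A i) (x : X i) (xp : Option (X i)),
        occAMM T μ0 Obs γ π Tx i o a x xp = occAMM T μ0 Obs γ π' Tx' i o a x xp)) ∧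
    ((∀ (i : Fin n) (o : Ω i) (a : A i) (x : X i) (xp : Option (X i)),
        occAMM T μ0 Obs γ π Tx i o a x xp = occAMM T μ0 Obs γ π' Tx' i o a x xp) →
      (∀ i : Fin n, π i = π' i ∧ Tx i = Tx' i)) := by
  have hρ := occAMM_isOccupancyFactorization T μ0 Obs γ hπ_sum hTx_sum
  have hρ' := occAMM_isOccupancyFactorization T μ0 Obs γ hπ'_sum hTx'_sum
  have marginals_eq_of_eq : (∀ i o a x xp,
      occAMM T μ0 Obs γ π Tx i o a x xp = occAMM T μ0 Obs γ π' Tx' i o a x xp) →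
      (∀ i o a x, ∑ xp, occAMM T μ0 Obs γ π Tx i o a x xp
          = ∑ xp, occAMM T μ0 Obs γ π' Tx' i o a x xp) ∧
      (∀ i o x xp, ∑ a, occAMM T μ0 Obs γ π Tx i o a x xp
          = ∑ a, occAMM T μ0 Obs γ π' Tx' i o a x xp) := fun h =>
    ⟨fun i o a x => Finset.sum_congr rfl fun xp _ => h i o a x xp,
      fun i o x xp => Finset.sum_congr rfl fun a _ => h i o a x xp⟩
  refine ⟨⟨fun ⟨h1, h2⟩ i o a x xp => ?_, marginals_eq_of_eq⟩, fun h i => ?_⟩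
  · obtain ⟨hπ, hTx, hw⟩ :=
      (hρ i).eq_of_marginals_eq (hρ' i) (hpos_oxp i) (hpos_ox i) (h1 i) (h2 i)
    rw [(hρ i).eq_mul, (hρ' i).eq_mul, hπ, hTx, hw]
  · obtain ⟨h1, h2⟩ := marginals_eq_of_eq h
    obtain ⟨hπ, hTx, -⟩ :=
      (hρ i).eq_of_marginals_eq (hρ' i) (hpos_oxp i) (hpos_ox i) (h1 i) (h2 i)
    exact ⟨hπ, hTx⟩

/-- **factorization lemma for the factored objective.** Let
`N = (π_i, Tx_i)` and `N' = (π_i', Tx_i')` be two joint agent models with AMM-occupancy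
measures `ρ_i` and `ρ_i'`, and assume all marginals `ρ_i(o,x⁻)`, `ρ_i(o,x)`,
`ρ_i'(o,x⁻)`, `ρ_i'(o,x)` are strictly positive. Then the π-occupancy measures
`ρ_i(o,a,x) = ∑_{x⁻} ρ_i(o,a,x,x⁻)` and Tx-occupancy measures
`ρ_i(o,x,x⁻) = ∑_a ρ_i(o,a,x,x⁻)` of the two models agree (for all agents) if and only if
the full AMM-occupancy measures agree; and under either condition `π_i = π_i'` and
`Tx_i = Tx_i'` for all `i`. -/
theorem occAMM_factored_matching
    {n : ℕ} {S : Type} {A : Fin n → Type} {Ω : Fin n → Type} {X : Fin n → Type}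
    [Fintype S] [Nonempty S]
    [∀ i, Fintype (A i)] [∀ i, Nonempty (A i)]
    [∀ i, Fintype (Ω i)] [∀ i, Nonempty (Ω i)]
    [∀ i, Fintype (X i)] [∀ i, Nonempty (X i)]
    (T : S → (∀ i, A i) → S → ℝ) (μ0 : S → ℝ)
    (Obs : ∀ i, S → Option (∀ j, A j) → Ω i) (γ : ℝ)
    (π π' : ∀ i, Ω i → X i → A i → ℝ)
    (Tx Tx' : ∀ i, Ω i → Option (X i) → X i → ℝ)
    (hT_nonneg : ∀ s a s', 0 ≤ T s a s') (hT_sum : ∀ s a, ∑ s' : S, T s a s' = 1)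
    (hμ0_nonneg : ∀ s, 0 ≤ μ0 s) (hμ0_sum : ∑ s : S, μ0 s = 1)
    (hγ0 : 0 < γ) (hγ1 : γ < 1)
    (hπ_nonneg : ∀ i o x a, 0 ≤ π i o x a)
    (hπ_sum : ∀ i o x, ∑ a : A i, π i o x a = 1)
    (hTx_nonneg : ∀ i o xp x, 0 ≤ Tx i o xp x)
    (hTx_sum : ∀ i o xp, ∑ x : X i, Tx i o xp x = 1)
    (hπ'_nonneg : ∀ i o x a, 0 ≤ π' i o x a)
    (hπ'_sum : ∀ i o x, ∑ a : A i, π' i o x a = 1)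
    (hTx'_nonneg : ∀ i o xp x, 0 ≤ Tx' i o xp x)
    (hTx'_sum : ∀ i o xp, ∑ x : X i, Tx' i o xp x = 1)
    (hpos_oxp : ∀ (i : Fin n) (o : Ω i) (xp : Option (X i)),
      0 < ∑ a : A i, ∑ x : X i, occAMM T μ0 Obs γ π Tx i o a x xp)
    (hpos_ox : ∀ (i : Fin n) (o : Ω i) (x : X i),
      0 < ∑ a : A i, ∑ xp : Option (X i), occAMM T μ0 Obs γ π Tx i o a x xp)
    (hpos'_oxp : ∀ (i : Fin n) (o : Ω i) (xp : Option (X i)),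
      0 < ∑ a : A i, ∑ x : X i, occAMM T μ0 Obs γ π' Tx' i o a x xp)
    (hpos'_ox : ∀ (i : Fin n) (o : Ω i) (x : X i),
      0 < ∑ a : A i, ∑ xp : Option (X i), occAMM T μ0 Obs γ π' Tx' i o a x xp) :
    (((∀ (i : Fin n) (o : Ω i) (a : A i) (x : X i),
        (∑ xp : Option (X i), occAMM T μ0 Obs γ π Tx i o a x xp)
          = ∑ xp : Option (X i), occAMM T μ0 Obs γ π' Tx' i o a x xp) ∧
      (∀ (i : Fin n) (o : Ω i) (x : X i) (xp : Option (X i)),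
        (∑ a : A i, occAMM T μ0 Obs γ π Tx i o a x xp)
          = ∑ a : A i, occAMM T μ0 Obs γ π' Tx' i o a x xp))
      ↔
      (∀ (i : Fin n) (o : Ω i) (a : A i) (x : X i) (xp : Option (X i)),
        occAMM T μ0 Obs γ π Tx i o a x xp = occAMM T μ0 Obs γ π' Tx' i o a x xp)) ∧
    ((∀ (i : Fin n) (o : Ω i) (a : A i) (x : X i) (xp : Option (X i)),
        occAMM T μ0 Obs γ π Tx i o a x xp = occAMM T μ0 Obs γ π' Tx' i o a x xp) →
      (∀ i : Fin n, π i = π' i ∧ Tx i = Tx' i)) :=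
  occAMM_factored_matching_general T μ0 Obs γ π π' Tx Tx' hπ_sum hTx_sum hπ'_sum hTx'_sum hpos_oxp
    hpos_ox

end DecPOMDP
end

section
/- (Trajectory factorization underlying the decentralized E-step.) In a finite Dec-POMDP with hierarchical agent models, fix a horizon h ≥ 0 and fix values ō = (ō^0,…,ō^h) of joint observations, ā = (ā^0,…,ā^h) of joint actions, and x̄ = (x̄^0,…,x̄^h) of joint subtasks, with the convention x̄_i^{-1} := #. Then the joint probability factorizes as P(o^{0:h} = ō, a^{0:h} = ā, x^{0:h} = x̄) = C(ō,ā) · ∏_{i=1}^n ∏_{t=0}^h [ Tx_i(x̄_i^t | ō_i^t, x̄_i^{t-1}) · π_i(ā_i^t | ō_i^t, x̄_i^t) ], where C(ō,ā) := ∑_{s^0,…,s^h ∈ S} μ0(s^0)·𝟙[O(s^0,#) = ō^0]·∏_{t=0}^{h-1} T(s^{t+1}|s^t,ā^t)·𝟙[O(s^{t+1},ā^t) = ō^{t+1}] depends only on the observation and action trajectories (here O(s,a) denotes the tuple (O_1(s,a),…,O_n(s,a))). Consequently, the conditional distribution of the subtask trajectories x^{0:h} given the observation-action trajectory (ō,ā)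 factorizes as a product over agents, each factor depending only on that agent's own observations, actions, and subtasks. -/
open scoped BigOperators
open Classical

section TrajectoryFactorization

variable {n : ℕ} {S : Type} {A : Fin n → Type} {Ω : Fin n → Type} {X : Fin n → Type}

/-- The previous joint subtask at time `t`: `#` (i.e. `none`) at `t = 0`, and
`xtr^{t-1}` otherwise. -/
noncomputable def prevJoint {h : ℕ} (xtr : Fin (h + 1) → ∀ i, X i) (t : Fin (h + 1))
    (i : Fin n) : Option (X i) :=
  Fin.cases none (fun k => some (xtr k.castSucc i)) t

/-- The previous (single-agent) subtask at time `t`: `#` (i.e. `none`) at `t = 0`, and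
`ξ^{t-1}` otherwise. -/
noncomputable def prevOne {Y : Type} {h : ℕ} (ξ : Fin (h + 1) → Y) (t : Fin (h + 1)) :
    Option Y :=
  Fin.cases none (fun k => some (ξ k.castSucc)) t

/-- The weight of a hidden-state sequence `s^{0:h}` compatible with the joint
observation trajectory `otr` and joint action trajectory `atr`:
`μ0(s⁰)·𝟙[O(s⁰,#) = otr⁰]·∏_{t<h} T(s^{t+1}|s^t,atr^t)·𝟙[O(s^{t+1},atr^t) = otr^{t+1}]`. -/
noncomputable def stateChainWeight [Fintype S]
    (T : S → (∀ i, A i) → S → ℝ) (μ0 : S → ℝ)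
    (Obs : ∀ i, S → Option (∀ j, A j) → Ω i) {h : ℕ}
    (otr : Fin (h + 1) → ∀ i, Ω i) (atr : Fin (h + 1) → ∀ i, A i)
    (s : Fin (h + 1) → S) : ℝ :=
  (μ0 (s 0) * (if ∀ i, otr 0 i = Obs i (s 0) none then (1 : ℝ) else 0)) *
    ∏ t : Fin h,
      (T (s t.castSucc) (atr t.castSucc) (s t.succ) *
        (if ∀ i, otr t.succ i = Obs i (s t.succ) (some (atr t.castSucc)) then (1 : ℝ) else 0))

/-- The joint probability `P(o^{0:h} = otr, a^{0:h} = atr, x^{0:h} = xtr)` of a full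
observation-action-subtask trajectory in the Dec-POMDP with hierarchical agent models,
obtained by summing the full path density over the hidden state sequences. -/
noncomputable def trajProb [Fintype S]
    (T : S → (∀ i, A i) → S → ℝ) (μ0 : S → ℝ)
    (Obs : ∀ i, S → Option (∀ j, A j) → Ω i)
    (π : ∀ i, Ω i → X i → A i → ℝ)
    (Tx : ∀ i, Ω i → Option (X i) → X i → ℝ) {h : ℕ}
    (otr : Fin (h + 1) → ∀ i, Ω i) (atr : Fin (h + 1) → ∀ i, A i)
    (xtr : Fin (h + 1) → ∀ i, X i) : ℝ :=
  ∑ s : Fin (h + 1) → S,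
    stateChainWeight T μ0 Obs otr atr s *
      ∏ t : Fin (h + 1), ∏ i : Fin n,
        (Tx i (otr t i) (prevJoint xtr t i) (xtr t i) * π i (otr t i) (xtr t i) (atr t i))

/-- The per-agent factor `∏_{t=0}^h Tx_i(ξ^t|otr_i^t, ξ^{t-1})·π_i(atr_i^t|otr_i^t, ξ^t)`
of agent `i`'s subtask trajectory `ξ`, given that agent's own observations and actions. -/
noncomputable def agentFactor
    (π : ∀ i, Ω i → X i → A i → ℝ)
    (Tx : ∀ i, Ω i → Option (X i) → X i → ℝ) {h : ℕ} (i : Fin n)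
    (otri : Fin (h + 1) → Ω i) (atri : Fin (h + 1) → A i)
    (ξ : Fin (h + 1) → X i) : ℝ :=
  ∏ t : Fin (h + 1), (Tx i (otri t) (prevOne ξ t) (ξ t) * π i (otri t) (ξ t) (atri t))

/-!
Once the observation and action trajectories are fixed, the hidden states and the agents' subtasks
no longer interact: every factor of the path weight involves either the state sequence alone or a
single agent's subtasks alone. Summing out the states therefore leaves a constant `C(ō, ā)` times a
product of per-agent factors, and by distributivity the sum of that product over joint subtask
trajectories is the product of the per-agent sums, so normalizing cancels `C(ō, ā)`.
-/

theorem prevJoint_eq_prevOne {h : ℕ} (xtr : Fin (h + 1) → ∀ i, X i) (t : Fin (h + 1))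
    (i : Fin n) : prevJoint xtr t i = prevOne (fun t => xtr t i) t :=
  Fin.cases rfl (fun _ => rfl) t

theorem Fintype.sum_prod_piComm {ι κ : Type*} [Fintype ι] [DecidableEq ι] [Fintype κ]
    [DecidableEq κ] {Y : ι → Type*} [∀ i, Fintype (Y i)] {R : Type*} [CommSemiring R]
    (f : ∀ i, (κ → Y i) → R) :
    ∑ y : κ → ∀ i, Y i, ∏ i, f i (fun t => y t i) = ∏ i, ∑ ξ : κ → Y i, f i ξ := by
  rw [Fintype.prod_sum]
  exact Fintype.sum_equiv (Equiv.piComm fun _ i => Y i) _ _ fun _ => rfl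

section StateChain

variable [Fintype S] (T : S → (∀ i, A i) → S → ℝ) (μ0 : S → ℝ)
  (Obs : ∀ i, S → Option (∀ j, A j) → Ω i) (π : ∀ i, Ω i → X i → A i → ℝ)
  (Tx : ∀ i, Ω i → Option (X i) → X i → ℝ) {h : ℕ}
  (otr : Fin (h + 1) → ∀ i, Ω i) (atr : Fin (h + 1) → ∀ i, A i)

theorem trajProb_eq_mul_prod_agentFactor (xtr : Fin (h + 1) → ∀ i, X i) :
    trajProb T μ0 Obs π Tx otr atr xtr
      = (∑ s : Fin (h + 1) → S, stateChainWeight T μ0 Obs otr atr s) *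
          ∏ i : Fin n,
            agentFactor π Tx i (fun t => otr t i) (fun t => atr t i) (fun t => xtr t i) := by
  rw [trajProb, ← Finset.sum_mul, Finset.prod_comm]
  simp only [agentFactor, prevJoint_eq_prevOne]

theorem sum_trajProb [∀ i, Fintype (X i)] :
    ∑ xtr : Fin (h + 1) → ∀ i, X i, trajProb T μ0 Obs π Tx otr atr xtr
      = (∑ s : Fin (h + 1) → S, stateChainWeight T μ0 Obs otr atr s) *
          ∏ i : Fin n, ∑ ξ : Fin (h + 1) → X i,
            agentFactor π Tx i (fun t => otr t i) (fun t => atr t i) ξ := by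
  simp only [trajProb_eq_mul_prod_agentFactor, ← Finset.mul_sum]
  rw [Fintype.sum_prod_piComm
    (fun i => agentFactor π Tx i (fun t => otr t i) (fun t => atr t i))]

end StateChain

theorem trajProb_factorization_general
    [Fintype S]
    [∀ i, Fintype (X i)]
    (T : S → (∀ i, A i) → S → ℝ) (μ0 : S → ℝ)
    (Obs : ∀ i, S → Option (∀ j, A j) → Ω i)
    (π : ∀ i, Ω i → X i → A i → ℝ)
    (Tx : ∀ i, Ω i → Option (X i) → X i → ℝ)
    (h : ℕ) (otr : Fin (h + 1) → ∀ i, Ω i) (atr : Fin (h + 1) → ∀ i, A i) :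
    (∀ xtr : Fin (h + 1) → ∀ i, X i,
      trajProb T μ0 Obs π Tx otr atr xtr
        = (∑ s : Fin (h + 1) → S, stateChainWeight T μ0 Obs otr atr s) *
            ∏ i : Fin n,
              agentFactor π Tx i (fun t => otr t i) (fun t => atr t i) (fun t => xtr t i)) ∧
    ((0 < ∑ xtr : Fin (h + 1) → ∀ i, X i, trajProb T μ0 Obs π Tx otr atr xtr) →
      ∀ xtr : Fin (h + 1) → ∀ i, X i,
        trajProb T μ0 Obs π Tx otr atr xtr /
            (∑ xtr' : Fin (h + 1) → ∀ i, X i, trajProb T μ0 Obs π Tx otr atr xtr')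
          = ∏ i : Fin n,
              (agentFactor π Tx i (fun t => otr t i) (fun t => atr t i) (fun t => xtr t i) /
                ∑ ξ : Fin (h + 1) → X i,
                  agentFactor π Tx i (fun t => otr t i) (fun t => atr t i) ξ)) := by
  refine ⟨trajProb_eq_mul_prod_agentFactor T μ0 Obs π Tx otr atr, fun hpos xtr => ?_⟩
  rw [sum_trajProb] at hpos ⊢
  rw [trajProb_eq_mul_prod_agentFactor, mul_div_mul_left _ _ (left_ne_zero_of_mul hpos.ne'),
    Finset.prod_div_distrib]

/-- **trajectory factorization underlying the decentralized E-step.**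
For any horizon `h` and any joint trajectories `otr`, `atr`, `xtr`, the joint probability
factorizes as `P(o^{0:h}=otr, a^{0:h}=atr, x^{0:h}=xtr) = C(otr,atr) · ∏_i ∏_t
[Tx_i(xtr_i^t|otr_i^t, xtr_i^{t-1})·π_i(atr_i^t|otr_i^t, xtr_i^t)]`, where `C(otr,atr)` depends only on
the observation and action trajectories. Consequently, whenever `P(otr,atr) > 0`, the
conditional distribution of the subtask trajectories given `(otr,atr)` factorizes as a
product over agents, each factor depending only on that agent's own observations,
actions, and subtasks. -/
theorem trajProb_factorization
    [Fintype S] [Nonempty S]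
    [∀ i, Fintype (A i)] [∀ i, Nonempty (A i)]
    [∀ i, Fintype (Ω i)] [∀ i, Nonempty (Ω i)]
    [∀ i, Fintype (X i)] [∀ i, Nonempty (X i)]
    (T : S → (∀ i, A i) → S → ℝ) (μ0 : S → ℝ)
    (Obs : ∀ i, S → Option (∀ j, A j) → Ω i)
    (π : ∀ i, Ω i → X i → A i → ℝ)
    (Tx : ∀ i, Ω i → Option (X i) → X i → ℝ)
    (hT_nonneg : ∀ s a s', 0 ≤ T s a s') (hT_sum : ∀ s a, ∑ s' : S, T s a s' = 1)
    (hμ0_nonneg : ∀ s, 0 ≤ μ0 s) (hμ0_sum : ∑ s : S, μ0 s = 1)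
    (hπ_nonneg : ∀ i o x a, 0 ≤ π i o x a)
    (hπ_sum : ∀ i o x, ∑ a : A i, π i o x a = 1)
    (hTx_nonneg : ∀ i o xp x, 0 ≤ Tx i o xp x)
    (hTx_sum : ∀ i o xp, ∑ x : X i, Tx i o xp x = 1)
    (h : ℕ) (otr : Fin (h + 1) → ∀ i, Ω i) (atr : Fin (h + 1) → ∀ i, A i) :
    (∀ xtr : Fin (h + 1) → ∀ i, X i,
      trajProb T μ0 Obs π Tx otr atr xtr
        = (∑ s : Fin (h + 1) → S, stateChainWeight T μ0 Obs otr atr s) *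
            ∏ i : Fin n,
              agentFactor π Tx i (fun t => otr t i) (fun t => atr t i) (fun t => xtr t i)) ∧
    ((0 < ∑ xtr : Fin (h + 1) → ∀ i, X i, trajProb T μ0 Obs π Tx otr atr xtr) →
      ∀ xtr : Fin (h + 1) → ∀ i, X i,
        trajProb T μ0 Obs π Tx otr atr xtr /
            (∑ xtr' : Fin (h + 1) → ∀ i, X i, trajProb T μ0 Obs π Tx otr atr xtr')
          = ∏ i : Fin n,
              (agentFactor π Tx i (fun t => otr t i) (fun t => atr t i) (fun t => xtr t i) /
                ∑ ξ : Fin (h + 1) → X i,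
                  agentFactor π Tx i (fun t => otr t i) (fun t => atr t i) ξ)) :=
  trajProb_factorization_general T μ0 Obs π Tx h otr atr

end TrajectoryFactorization
end

section
/- (Justification of the occupancy-matching objective, Eq. 3.) In a finite Dec-POMDP with hierarchical agent models, let f : ℝ → ℝ satisfy f(1) = 0 and f(u) > 0 for every u ≠ 1. Let N_E = (π_{E,i}, Tx_{E,i})_{i=1..n} be an expert joint model whose AMM-occupancy measures ρ_{E,i} are strictly positive: ρ_{E,i}(o,a,x,x⁻) > 0 for all i and all arguments. For any joint model N = (π_i, Tx_i)_{i=1..n} with AMM-occupancy measures ρ_i, the objective ∑_{i=1}^n ∑_{o,a,x,x⁻} ρ_{E,i}(o,a,x,x⁻) · f( ρ_i(o,a,x,x⁻) / ρ_{E,i}(o,a,x,x⁻) ) is nonnegative, and it equals 0 if and only if ρ_i = ρ_{E,i} for all i, which in turn holds if and only if π_i = π_{E,i} and Tx_i = Tx_{E,i} for all i. -/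
/-!
At time `t` the agents draw `x^t` and then `a^t` from product kernels given `(s^t, o^t, x^{t-1})`,
so summing out the other agents leaves `ρ_i(o,a,x,x⁻) = Tx_i(x|o,x⁻) · π_i(a|o,x) · ρ_i(o,x⁻)`.
Summing over `(x, a)` shows that equal occupancies have equal marginals `ρ_i(o,x⁻)`; as the
expert's occupancy is nonzero, cancelling the marginal and then `Tx_i` recovers both factors.
The claims about the objective hold termwise: `ρ_E · f(ρ/ρ_E) ≥ 0`, with equality iff `ρ = ρ_E`.
-/

open scoped BigOperators
open Classical

section DecPOMDP

variable {n : ℕ} {S : Type} {A : Fin n → Type} {Ω : Fin n → Type} {X : Fin n → Type}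

theorem Fintype.sum_ite_eval_prod {ι : Type*} [Fintype ι] [DecidableEq ι] {Y : ι → Type*}
    [∀ j, Fintype (Y j)]
    (F : ∀ j, Y j → ℝ) (i : ι) (hF : ∀ j ≠ i, ∑ y, F j y = 1) (y₀ : Y i) :
    ∑ g : ∀ j, Y j, (if g i = y₀ then ∏ j, F j (g j) else 0) = F i y₀ := by
  set G := Function.update F i fun y => if y = y₀ then F i y else 0
  have hG : ∀ g : ∀ j, Y j, (if g i = y₀ then ∏ j, F j (g j) else 0) = ∏ j, G j (g j) := by
    intro g
    by_cases hg : g i = y₀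
    · refine (if_pos hg).trans (Finset.prod_congr rfl fun j _ => ?_)
      rcases eq_or_ne j i with rfl | hj
      · simp [G, hg]
      · simp [G, hj]
    · rw [if_neg hg, eq_comm]
      exact Finset.prod_eq_zero (Finset.mem_univ i) (by simp [G, hg])
  rw [Fintype.sum_congr _ _ hG, ← Fintype.prod_sum, Fintype.prod_eq_single i fun j hj => by
    simp [G, hj, hF j hj]]
  simp [G]

theorem Fintype.sum_sum_ite_eval_prod_mul_prod {ι : Type*} [Fintype ι] [DecidableEq ι]
    {Y Z : ι → Type*} [∀ j, Fintype (Y j)] [∀ j, Fintype (Z j)]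
    (F : ∀ j, Y j → ℝ) (G : ∀ j, Y j → Z j → ℝ) (i : ι)
    (hF : ∀ j ≠ i, ∑ y, F j y = 1) (hG : ∀ j ≠ i, ∀ y, ∑ z, G j y z = 1) (y₀ : Y i) (z₀ : Z i) :
    ∑ y : ∀ j, Y j, ∑ z : ∀ j, Z j,
        (if y i = y₀ ∧ z i = z₀ then (∏ j, F j (y j)) * ∏ j, G j (y j) (z j) else 0) =
      F i y₀ * G i y₀ z₀ := by
  have hz : ∀ y : ∀ j, Y j, ∑ z : ∀ j, Z j,
      (if y i = y₀ ∧ z i = z₀ then (∏ j, F j (y j)) * ∏ j, G j (y j) (z j) else 0) =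
      G i y₀ z₀ * if y i = y₀ then ∏ j, F j (y j) else 0 := by
    intro y
    by_cases hy : y i = y₀
    · simp only [hy, true_and, if_true]
      simp_rw [← mul_ite_zero, ← Finset.mul_sum]
      rw [Fintype.sum_ite_eval_prod (fun j => G j (y j)) i (fun j hj => hG j hj (y j)), hy,
        mul_comm]
    · simp [hy]
  rw [Fintype.sum_congr _ _ hz, ← Finset.mul_sum, Fintype.sum_ite_eval_prod F i hF, mul_comm]

theorem sum_sum_mul_mul_eq_of_sum_eq_one {Y Z : Type*} [Fintype Y] [Fintype Z]
    {τ : Y → ℝ} {κ : Y → Z → ℝ} (hτ : ∑ y, τ y = 1) (hκ : ∀ y, ∑ z, κ y z = 1) (c : ℝ) :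
    ∑ y, ∑ z, τ y * κ y z * c = c := by
  simp_rw [mul_right_comm _ _ c, ← Finset.mul_sum, hκ, mul_one, ← Finset.sum_mul, hτ, one_mul]

theorem eq_and_eq_of_mul_mul_eq {O P Y Z : Type*} [Fintype Y] [Fintype Z] [Nonempty P]
    {τ τ' : O → P → Y → ℝ} {κ κ' : O → Y → Z → ℝ} {q q' : O → P → ℝ}
    (hτ : ∀ o p, ∑ y, τ o p y = 1) (hτ' : ∀ o p, ∑ y, τ' o p y = 1)
    (hκ : ∀ o y, ∑ z, κ o y z = 1) (hκ' : ∀ o y, ∑ z, κ' o y z = 1)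
    (hne : ∀ o p y z, τ' o p y * κ' o y z * q' o p ≠ 0)
    (h : ∀ o p y z, τ o p y * κ o y z * q o p = τ' o p y * κ' o y z * q' o p) :
    τ = τ' ∧ κ = κ' := by
  have hq : ∀ o p, q o p = q' o p := fun o p => by
    rw [← sum_sum_mul_mul_eq_of_sum_eq_one (hτ o p) (hκ o) (q o p),
      ← sum_sum_mul_mul_eq_of_sum_eq_one (hτ' o p) (hκ' o) (q' o p)]
    exact Fintype.sum_congr _ _ fun y => Fintype.sum_congr _ _ fun z => h o p y z
  have hτκ : ∀ o p y z, τ o p y * κ o y z = τ' o p y * κ' o y z := fun o p y z =>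
    mul_right_cancel₀ (right_ne_zero_of_mul (hne o p y z)) (hq o p ▸ h o p y z)
  have hτ_eq : τ = τ' := by
    ext o p y
    simpa only [← Finset.mul_sum, hκ, hκ', mul_one] using
      Fintype.sum_congr _ _ fun z => hτκ o p y z
  refine ⟨hτ_eq, ?_⟩
  ext o y z
  obtain ⟨p⟩ := ‹Nonempty P›
  exact mul_left_cancel₀ (left_ne_zero_of_mul (left_ne_zero_of_mul (hne o p y z)))
    (hτ_eq ▸ hτκ o p y z)

theorem mul_apply_div_nonneg {f : ℝ → ℝ} (hf1 : f 1 = 0) (hfpos : ∀ u, u ≠ 1 → 0 < f u)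
    {w : ℝ} (hw : 0 ≤ w) (p : ℝ) : 0 ≤ w * f (p / w) := by
  refine mul_nonneg hw ?_
  rcases eq_or_ne (p / w) 1 with h | h
  · rw [h, hf1]
  · exact (hfpos _ h).le

theorem mul_apply_div_eq_zero_iff {f : ℝ → ℝ} (hf1 : f 1 = 0) (hfpos : ∀ u, u ≠ 1 → 0 < f u)
    {w : ℝ} (hw : w ≠ 0) (p : ℝ) : w * f (p / w) = 0 ↔ p = w := by
  rw [mul_eq_zero, or_iff_right hw, ← div_eq_one_iff_eq hw]
  exact ⟨fun h => by_contra fun hne => (hfpos _ hne).ne' h, fun h => h ▸ hf1⟩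

section Occupancy

variable [Fintype S] [∀ i, Fintype (A i)] [∀ i, Fintype (Ω i)] [∀ i, Fintype (X i)]
  (T : S → (∀ i, A i) → S → ℝ) (μ0 : S → ℝ) (Obs : ∀ i, S → Option (∀ j, A j) → Ω i)
  (γ : ℝ) (π : ∀ i, Ω i → X i → A i → ℝ) (Tx : ∀ i, Ω i → Option (X i) → X i → ℝ)

/-- The time-`t` law of `(s^t, o^t, x^{t-1})`: `jointDist` before the agents draw `x^t, a^t`. -/
noncomputable def preDecisionDist : ℕ → S → (∀ i, Ω i) → (∀ i, Option (X i)) → ℝ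
  | 0, s, o, xp =>
      μ0 s * (if (∀ i, o i = Obs i s none) ∧ xp = (fun _ => none) then (1 : ℝ) else 0)
  | (t + 1), s', o', xp' =>
      ∑ s : S, ∑ o : (∀ i, Ω i), ∑ xp : (∀ i, Option (X i)), ∑ x : (∀ i, X i),
        ∑ a : (∀ i, A i),
          jointDist T μ0 Obs π Tx t s o xp x a * T s a s' *
            (if (∀ i, o' i = Obs i s' (some a)) ∧ xp' = (fun i => some (x i))
              then (1 : ℝ) else 0)

theorem jointDist_eq_preDecisionDist_mul (t : ℕ) (s : S) (o : ∀ i, Ω i)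
    (xp : ∀ i, Option (X i)) (x : ∀ i, X i) (a : ∀ i, A i) :
    jointDist T μ0 Obs π Tx t s o xp x a =
      preDecisionDist T μ0 Obs π Tx t s o xp *
        ((∏ i, Tx i (o i) (xp i) (x i)) * ∏ i, π i (o i) (x i) (a i)) := by
  cases t <;> rfl

/-- `ρ_i(o, x⁻)`, the discounted occupancy of `(o_i^t, x_i^{t-1})`. -/
noncomputable def preDecisionOcc (i : Fin n) (o : Ω i) (xp : Option (X i)) : ℝ :=
  ∑' t : ℕ, γ ^ t *
    ∑ s : S, ∑ oj : (∀ j, Ω j), ∑ xpj : (∀ j, Option (X j)),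
      if oj i = o ∧ xpj i = xp then preDecisionDist T μ0 Obs π Tx t s oj xpj else 0

variable {π Tx}

theorem sum_sum_ite_jointDist_eq (hπ_sum : ∀ i o x, ∑ a : A i, π i o x a = 1)
    (hTx_sum : ∀ i o xp, ∑ x : X i, Tx i o xp x = 1)
    (i : Fin n) (o : Ω i) (a : A i) (x : X i) (xp : Option (X i)) (t : ℕ) (s : S)
    (oj : ∀ j, Ω j) (xpj : ∀ j, Option (X j)) :
    ∑ xj : (∀ j, X j), ∑ aj : (∀ j, A j),
        (if oj i = o ∧ aj i = a ∧ xj i = x ∧ xpj i = xp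
          then jointDist T μ0 Obs π Tx t s oj xpj xj aj else 0) =
      Tx i o xp x * π i o x a *
        if oj i = o ∧ xpj i = xp then preDecisionDist T μ0 Obs π Tx t s oj xpj else 0 := by
  by_cases h : oj i = o ∧ xpj i = xp
  · have hsplit : ∀ xj aj, (if oj i = o ∧ aj i = a ∧ xj i = x ∧ xpj i = xp
        then jointDist T μ0 Obs π Tx t s oj xpj xj aj else 0) =
        preDecisionDist T μ0 Obs π Tx t s oj xpj * if xj i = x ∧ aj i = a then
          (∏ j, Tx j (oj j) (xpj j) (xj j)) * ∏ j, π j (oj j) (xj j) (aj j) else 0 := by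
      intro xj aj
      split_ifs <;> simp_all [jointDist_eq_preDecisionDist_mul]
    simp_rw [hsplit, ← Finset.mul_sum]
    rw [Fintype.sum_sum_ite_eval_prod_mul_prod _ _ i (fun j _ => hTx_sum j _ _)
      (fun j _ => hπ_sum j _), if_pos h, h.1, h.2]
    ring
  · simp only [if_neg h, mul_zero]
    refine Fintype.sum_eq_zero _ fun xj => Fintype.sum_eq_zero _ fun aj => if_neg ?_
    rintro ⟨ho, -, -, hxp⟩
    exact h ⟨ho, hxp⟩

theorem occAMM_eq_mul_preDecisionOcc (hπ_sum : ∀ i o x, ∑ a : A i, π i o x a = 1)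
    (hTx_sum : ∀ i o xp, ∑ x : X i, Tx i o xp x = 1)
    (i : Fin n) (o : Ω i) (a : A i) (x : X i) (xp : Option (X i)) :
    occAMM T μ0 Obs γ π Tx i o a x xp =
      Tx i o xp x * π i o x a * preDecisionOcc T μ0 Obs γ π Tx i o xp := by
  unfold occAMM preDecisionOcc
  rw [← tsum_mul_left]
  congr 1 with t
  simp only [sum_sum_ite_jointDist_eq T μ0 Obs hπ_sum hTx_sum, ← Finset.mul_sum]
  ring

end Occupancy

theorem occupancy_matching_objective_general
    {n : ℕ} {S : Type} {A : Fin n → Type} {Ω : Fin n → Type} {X : Fin n → Type}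
    [Fintype S] [∀ i, Fintype (A i)] [∀ i, Fintype (Ω i)] [∀ i, Fintype (X i)]
    (T : S → (∀ i, A i) → S → ℝ) (μ0 : S → ℝ)
    (Obs : ∀ i, S → Option (∀ j, A j) → Ω i) (γ : ℝ)
    (f : ℝ → ℝ) (hf1 : f 1 = 0) (hfpos : ∀ u : ℝ, u ≠ 1 → 0 < f u)
    (πE : ∀ i, Ω i → X i → A i → ℝ)
    (TxE : ∀ i, Ω i → Option (X i) → X i → ℝ)
    (π : ∀ i, Ω i → X i → A i → ℝ)
    (Tx : ∀ i, Ω i → Option (X i) → X i → ℝ)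
    (hπE_sum : ∀ i o x, ∑ a : A i, πE i o x a = 1)
    (hTxE_sum : ∀ i o xp, ∑ x : X i, TxE i o xp x = 1)
    (hπ_sum : ∀ i o x, ∑ a : A i, π i o x a = 1)
    (hTx_sum : ∀ i o xp, ∑ x : X i, Tx i o xp x = 1)
    (hρE_pos : ∀ (i : Fin n) (o : Ω i) (a : A i) (x : X i) (xp : Option (X i)),
      0 < occAMM T μ0 Obs γ πE TxE i o a x xp) :
    (0 ≤ ∑ i : Fin n, ∑ o : Ω i, ∑ a : A i, ∑ x : X i, ∑ xp : Option (X i),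
        occAMM T μ0 Obs γ πE TxE i o a x xp *
          f (occAMM T μ0 Obs γ π Tx i o a x xp / occAMM T μ0 Obs γ πE TxE i o a x xp)) ∧
    ((∑ i : Fin n, ∑ o : Ω i, ∑ a : A i, ∑ x : X i, ∑ xp : Option (X i),
        occAMM T μ0 Obs γ πE TxE i o a x xp *
          f (occAMM T μ0 Obs γ π Tx i o a x xp / occAMM T μ0 Obs γ πE TxE i o a x xp))
        = 0
      ↔ (∀ (i : Fin n) (o : Ω i) (a : A i) (x : X i) (xp : Option (X i)),
          occAMM T μ0 Obs γ π Tx i o a x xp = occAMM T μ0 Obs γ πE TxE i o a x xp)) ∧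
    ((∀ (i : Fin n) (o : Ω i) (a : A i) (x : X i) (xp : Option (X i)),
        occAMM T μ0 Obs γ π Tx i o a x xp = occAMM T μ0 Obs γ πE TxE i o a x xp)
      ↔ (∀ i : Fin n, π i = πE i ∧ Tx i = TxE i)) := by
  have hterm (i o a x xp) : 0 ≤ occAMM T μ0 Obs γ πE TxE i o a x xp *
      f (occAMM T μ0 Obs γ π Tx i o a x xp / occAMM T μ0 Obs γ πE TxE i o a x xp) :=
    mul_apply_div_nonneg hf1 hfpos (hρE_pos i o a x xp).le _
  refine ⟨?_, ?_, fun h i => ?_, fun h => ?_⟩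
  · (repeat refine Finset.sum_nonneg fun _ _ => ?_); exact hterm ..
  · simp (disch := intro _ _; (repeat refine Finset.sum_nonneg fun _ _ => ?_); exact hterm ..)
      only [Finset.sum_eq_zero_iff_of_nonneg, Finset.mem_univ, forall_const,
        mul_apply_div_eq_zero_iff hf1 hfpos (hρE_pos _ _ _ _ _).ne']
  · have hρ := occAMM_eq_mul_preDecisionOcc T μ0 Obs γ hπ_sum hTx_sum i
    have hρE := occAMM_eq_mul_preDecisionOcc T μ0 Obs γ hπE_sum hTxE_sum i
    refine (eq_and_eq_of_mul_mul_eq (q := preDecisionOcc T μ0 Obs γ π Tx i)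
      (q' := preDecisionOcc T μ0 Obs γ πE TxE i) (hTx_sum i) (hTxE_sum i) (hπ_sum i)
      (hπE_sum i) (fun o xp x a => ?_) fun o xp x a => ?_).symm
    · exact hρE o a x xp ▸ (hρE_pos i o a x xp).ne'
    · rw [← hρ, ← hρE]
      exact h i o a x xp
  · obtain ⟨rfl, rfl⟩ : π = πE ∧ Tx = TxE := ⟨funext fun i => (h i).1, funext fun i => (h i).2⟩
    exact fun _ _ _ _ _ => rfl

/-- **justification of the occupancy-matching objective, Eq. 3.**
Let `f : ℝ → ℝ` satisfy `f(1) = 0` and `f(u) > 0` for `u ≠ 1`, and let the expert joint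
model `N_E = (π_E, Tx_E)` have strictly positive AMM-occupancy measures `ρ_{E,i}`. For any
joint model `N = (π, Tx)` with AMM-occupancy measures `ρ_i`, the objective
`∑_i ∑_{o,a,x,x⁻} ρ_{E,i}·f(ρ_i/ρ_{E,i})` is nonnegative; it is `0` iff `ρ_i = ρ_{E,i}`
for all `i`, which holds iff `π_i = π_{E,i}` and `Tx_i = Tx_{E,i}` for all `i`. -/
theorem occupancy_matching_objective
    {n : ℕ} {S : Type} {A : Fin n → Type} {Ω : Fin n → Type} {X : Fin n → Type}
    [Fintype S] [Nonempty S]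
    [∀ i, Fintype (A i)] [∀ i, Nonempty (A i)]
    [∀ i, Fintype (Ω i)] [∀ i, Nonempty (Ω i)]
    [∀ i, Fintype (X i)] [∀ i, Nonempty (X i)]
    (T : S → (∀ i, A i) → S → ℝ) (μ0 : S → ℝ)
    (Obs : ∀ i, S → Option (∀ j, A j) → Ω i) (γ : ℝ)
    (f : ℝ → ℝ) (hf1 : f 1 = 0) (hfpos : ∀ u : ℝ, u ≠ 1 → 0 < f u)
    (πE : ∀ i, Ω i → X i → A i → ℝ)
    (TxE : ∀ i, Ω i → Option (X i) → X i → ℝ)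
    (π : ∀ i, Ω i → X i → A i → ℝ)
    (Tx : ∀ i, Ω i → Option (X i) → X i → ℝ)
    (hT_nonneg : ∀ s a s', 0 ≤ T s a s') (hT_sum : ∀ s a, ∑ s' : S, T s a s' = 1)
    (hμ0_nonneg : ∀ s, 0 ≤ μ0 s) (hμ0_sum : ∑ s : S, μ0 s = 1)
    (hγ0 : 0 < γ) (hγ1 : γ < 1)
    (hπE_nonneg : ∀ i o x a, 0 ≤ πE i o x a)
    (hπE_sum : ∀ i o x, ∑ a : A i, πE i o x a = 1)
    (hTxE_nonneg : ∀ i o xp x, 0 ≤ TxE i o xp x)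
    (hTxE_sum : ∀ i o xp, ∑ x : X i, TxE i o xp x = 1)
    (hπ_nonneg : ∀ i o x a, 0 ≤ π i o x a)
    (hπ_sum : ∀ i o x, ∑ a : A i, π i o x a = 1)
    (hTx_nonneg : ∀ i o xp x, 0 ≤ Tx i o xp x)
    (hTx_sum : ∀ i o xp, ∑ x : X i, Tx i o xp x = 1)
    (hρE_pos : ∀ (i : Fin n) (o : Ω i) (a : A i) (x : X i) (xp : Option (X i)),
      0 < occAMM T μ0 Obs γ πE TxE i o a x xp) :
    (0 ≤ ∑ i : Fin n, ∑ o : Ω i, ∑ a : A i, ∑ x : X i, ∑ xp : Option (X i),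
        occAMM T μ0 Obs γ πE TxE i o a x xp *
          f (occAMM T μ0 Obs γ π Tx i o a x xp / occAMM T μ0 Obs γ πE TxE i o a x xp)) ∧
    ((∑ i : Fin n, ∑ o : Ω i, ∑ a : A i, ∑ x : X i, ∑ xp : Option (X i),
        occAMM T μ0 Obs γ πE TxE i o a x xp *
          f (occAMM T μ0 Obs γ π Tx i o a x xp / occAMM T μ0 Obs γ πE TxE i o a x xp))
        = 0
      ↔ (∀ (i : Fin n) (o : Ω i) (a : A i) (x : X i) (xp : Option (X i)),
          occAMM T μ0 Obs γ π Tx i o a x xp = occAMM T μ0 Obs γ πE TxE i o a x xp)) ∧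
    ((∀ (i : Fin n) (o : Ω i) (a : A i) (x : X i) (xp : Option (X i)),
        occAMM T μ0 Obs γ π Tx i o a x xp = occAMM T μ0 Obs γ πE TxE i o a x xp)
      ↔ (∀ i : Fin n, π i = πE i ∧ Tx i = TxE i)) :=
  occupancy_matching_objective_general T μ0 Obs γ f hf1 hfpos πE TxE π Tx hπE_sum hTxE_sum hπ_sum
    hTx_sum hρE_pos

end DecPOMDP
end

section
/- (Equivalence of the factored objective, Eq. 4.) In a finite Dec-POMDP with hierarchical agent models, let f : ℝ → ℝ satisfy f(1) = 0 and f(u) > 0 for every u ≠ 1. Let N_E = (π_{E,i}, Tx_{E,i})_{i=1..n} be an expert joint model whose AMM-occupancy measures ρ_{E,i} are strictly positive: ρ_{E,i}(o,a,x,x⁻) > 0 for all i and all arguments. For a joint model N = (π_i, Tx_i)_{i=1..n} with AMM-occupancy measures ρ_i whose marginals ρ_i(o,x⁻) and ρ_i(o,x) are strictly positive, define the π-occupancy measures ρ_i(o,a,x) := ∑_{x⁻} ρ_i(o,a,x,x⁻) and the Tx-occupancy measures ρ_i(o,x,x⁻) := ∑_a ρ_i(o,a,x,x⁻), and similarly for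 ρ_{E,i}. Then the factored objective ∑_{i=1}^n [ ∑_{o,a,x} ρ_{E,i}(o,a,x)·f( ρ_i(o,a,x)/ρ_{E,i}(o,a,x) ) + ∑_{o,x,x⁻} ρ_{E,i}(o,x,x⁻)·f( ρ_i(o,x,x⁻)/ρ_{E,i}(o,x,x⁻) ) ] is nonnegative, and it equals 0 if and only if π_i = π_{E,i} and Tx_i = Tx_{E,i} for all i, i.e. the factored objective and the unfactored occupancy-matching objective have the same set of exact minimizers, namely the expert model N_E. -/
open scoped BigOperators
open Classical

section DecPOMDP

variable {n : ℕ} {S : Type} {A : Fin n → Type} {Ω : Fin n → Type} {X : Fin n → Type}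

section Aux
set_option linter.unusedSectionVars false

variable {n : ℕ} {S : Type} {A : Fin n → Type} {Ω : Fin n → Type} {X : Fin n → Type}
variable [Fintype S] [∀ i, Fintype (A i)] [∀ i, Fintype (Ω i)] [∀ i, Fintype (X i)]

private lemma sum_pi_prod {β : Fin n → Type} [∀ j, Fintype (β j)] (g : ∀ j, β j → ℝ) :
    ∑ p : (∀ j, β j), ∏ j, g j (p j) = ∏ j, ∑ b : β j, g j b := by
  rw [Finset.prod_univ_sum, Fintype.piFinset_univ]

private lemma sum_pi_ite {β : Fin n → Type} [∀ j, Fintype (β j)] (g : ∀ j, β j → ℝ)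
    (hg : ∀ j, ∑ b : β j, g j b = 1) (i : Fin n) (b : β i) :
    (∑ p : (∀ j, β j), if p i = b then ∏ j, g j (p j) else 0) = g i b := by
  classical
  have key : ∀ p : (∀ j, β j), (if p i = b then ∏ j, g j (p j) else 0)
      = ∏ j, Function.update g i (fun c => if c = b then g i c else 0) j (p j) := by
    intro p
    by_cases h : p i = b
    · rw [if_pos h]
      refine Finset.prod_congr rfl fun j _ => ?_
      rcases eq_or_ne j i with rfl | hj
      · simp [h]
      · simp [Function.update_of_ne hj]
    · rw [if_neg h]
      refine (Finset.prod_eq_zero (Finset.mem_univ i) ?_).symm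
      simp [h]
  simp_rw [key]
  rw [sum_pi_prod]
  rw [Finset.prod_eq_single i]
  · simp
  · intro j _ hj
    simp [Function.update_of_ne hj, hg j]
  · intro h; exact absurd (Finset.mem_univ i) h

variable (T : S → (∀ i, A i) → S → ℝ) (μ0 : S → ℝ)
variable (Obs : ∀ i, S → Option (∀ j, A j) → Ω i)
variable (π : ∀ i, Ω i → X i → A i → ℝ) (Tx : ∀ i, Ω i → Option (X i) → X i → ℝ)

/-- The head (the part not depending on current `x,a`) of `jointDist`. -/
noncomputable def headD : ℕ → S → (∀ i, Ω i) → (∀ i, Option (X i)) → ℝ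
  | 0, s, o, xp =>
      μ0 s * (if (∀ i, o i = Obs i s none) ∧ xp = (fun _ => none) then (1 : ℝ) else 0)
  | (t + 1), s', o', xp' =>
      ∑ s : S, ∑ o : (∀ i, Ω i), ∑ xp : (∀ i, Option (X i)), ∑ x : (∀ i, X i),
        ∑ a : (∀ i, A i),
          jointDist T μ0 Obs π Tx t s o xp x a * T s a s' *
            (if (∀ i, o' i = Obs i s' (some a)) ∧ xp' = (fun i => some (x i))
              then (1 : ℝ) else 0)

lemma jointDist_eq_headD (t : ℕ) (s : S) (o : ∀ i, Ω i) (xp : ∀ i, Option (X i))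
    (x : ∀ i, X i) (a : ∀ i, A i) :
    jointDist T μ0 Obs π Tx t s o xp x a
      = headD T μ0 Obs π Tx t s o xp *
          ((∏ i, Tx i (o i) (xp i) (x i)) * ∏ i, π i (o i) (x i) (a i)) := by
  cases t <;> rfl

lemma jointDist_nonneg (hT : ∀ s a s', 0 ≤ T s a s') (hμ0 : ∀ s, 0 ≤ μ0 s)
    (hπ : ∀ i o x a, 0 ≤ π i o x a) (hTx : ∀ i o xp x, 0 ≤ Tx i o xp x) :
    ∀ (t : ℕ) s o xp x a, 0 ≤ jointDist T μ0 Obs π Tx t s o xp x a := by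
  intro t
  induction t with
  | zero =>
    intro s o xp x a
    refine mul_nonneg (mul_nonneg (hμ0 s) ?_) (mul_nonneg ?_ ?_)
    · split <;> norm_num
    · exact Finset.prod_nonneg fun i _ => hTx i _ _ _
    · exact Finset.prod_nonneg fun i _ => hπ i _ _ _
  | succ t ih =>
    intro s' o' xp' x' a'
    refine mul_nonneg ?_ (mul_nonneg ?_ ?_)
    · refine Finset.sum_nonneg fun s _ => Finset.sum_nonneg fun o _ =>
        Finset.sum_nonneg fun xp _ => Finset.sum_nonneg fun x _ =>
        Finset.sum_nonneg fun a _ => ?_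
      refine mul_nonneg (mul_nonneg (ih s o xp x a) (hT s a s')) ?_
      split <;> norm_num
    · exact Finset.prod_nonneg fun i _ => hTx i _ _ _
    · exact Finset.prod_nonneg fun i _ => hπ i _ _ _

lemma headD_nonneg (hT : ∀ s a s', 0 ≤ T s a s') (hμ0 : ∀ s, 0 ≤ μ0 s)
    (hπ : ∀ i o x a, 0 ≤ π i o x a) (hTx : ∀ i o xp x, 0 ≤ Tx i o xp x) :
    ∀ (t : ℕ) s o xp, 0 ≤ headD T μ0 Obs π Tx t s o xp := by
  intro t
  cases t with
  | zero =>
    intro s o xp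
    refine mul_nonneg (hμ0 s) ?_
    split <;> norm_num
  | succ t =>
    intro s' o' xp'
    refine Finset.sum_nonneg fun s _ => Finset.sum_nonneg fun o _ =>
      Finset.sum_nonneg fun xp _ => Finset.sum_nonneg fun x _ =>
      Finset.sum_nonneg fun a _ => ?_
    refine mul_nonneg (mul_nonneg
      (jointDist_nonneg T μ0 Obs π Tx hT hμ0 hπ hTx t s o xp x a) (hT s a s')) ?_
    split <;> norm_num

lemma sum_tail (hπ_sum : ∀ i o x, ∑ a : A i, π i o x a = 1)
    (hTx_sum : ∀ i o xp, ∑ x : X i, Tx i o xp x = 1)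
    (c : ℝ) (o : ∀ i, Ω i) (xp : ∀ i, Option (X i)) :
    ∑ x : (∀ i, X i), ∑ a : (∀ i, A i),
      c * ((∏ i, Tx i (o i) (xp i) (x i)) * ∏ i, π i (o i) (x i) (a i)) = c := by
  have hA : ∀ (x : ∀ i, X i), ∑ a : (∀ i, A i), ∏ i, π i (o i) (x i) (a i) = 1 := fun x => by
    rw [sum_pi_prod]; exact Finset.prod_eq_one fun i _ => hπ_sum i _ _
  have hX : ∑ x : (∀ i, X i), ∏ i, Tx i (o i) (xp i) (x i) = 1 := by
    rw [sum_pi_prod]; exact Finset.prod_eq_one fun i _ => hTx_sum i _ _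
  simp_rw [← Finset.mul_sum, hA, mul_one, hX, mul_one]

lemma sum_ind (c : ∀ i, Ω i) (d : ∀ i, Option (X i)) :
    ∑ o : (∀ i, Ω i), ∑ xp : (∀ i, Option (X i)),
      (if (∀ i, o i = c i) ∧ xp = d then (1:ℝ) else 0) = 1 := by
  have key : ∀ (o : ∀ i, Ω i) (xp : ∀ i, Option (X i)),
      (if (∀ i, o i = c i) ∧ xp = d then (1:ℝ) else 0)
        = if xp = d then (if o = c then (1:ℝ) else 0) else 0 := by
    intro o xp
    by_cases h1 : o = c
    · subst h1; simp
    · have h2 : ¬ (∀ i, o i = c i) := fun h => h1 (funext h)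
      simp [h1, h2]

  simp_rw [key, Finset.sum_ite_eq', Finset.mem_univ, if_true]
  simp

lemma pack3 (g : S → (∀ i, Ω i) → (∀ i, Option (X i)) → ℝ) :
    ∑ w : S × (∀ i, Ω i) × (∀ i, Option (X i)), g w.1 w.2.1 w.2.2
      = ∑ s : S, ∑ o : (∀ i, Ω i), ∑ xp : (∀ i, Option (X i)), g s o xp := by
  simp_rw [Fintype.sum_prod_type]

lemma pack5 (g : S → (∀ i, Ω i) → (∀ i, Option (X i)) → (∀ i, X i) → (∀ i, A i) → ℝ) :
    ∑ q : S × (∀ i, Ω i) × (∀ i, Option (X i)) × (∀ i, X i) × (∀ i, A i),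
        g q.1 q.2.1 q.2.2.1 q.2.2.2.1 q.2.2.2.2
      = ∑ s : S, ∑ o : (∀ i, Ω i), ∑ xp : (∀ i, Option (X i)), ∑ x : (∀ i, X i),
          ∑ a : (∀ i, A i), g s o xp x a := by
  simp_rw [Fintype.sum_prod_type]
lemma jointDist_mass (hT_sum : ∀ s a, ∑ s' : S, T s a s' = 1) (hμ0_sum : ∑ s : S, μ0 s = 1)
    (hπ_sum : ∀ i o x, ∑ a : A i, π i o x a = 1)
    (hTx_sum : ∀ i o xp, ∑ x : X i, Tx i o xp x = 1) :
    ∀ t : ℕ, ∑ s : S, ∑ o : (∀ i, Ω i), ∑ xp : (∀ i, Option (X i)), ∑ x : (∀ i, X i),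
      ∑ a : (∀ i, A i), jointDist T μ0 Obs π Tx t s o xp x a = 1 := by
  have hhead : ∀ (t : ℕ),
      (∑ s : S, ∑ o : (∀ i, Ω i), ∑ xp : (∀ i, Option (X i)), ∑ x : (∀ i, X i),
        ∑ a : (∀ i, A i), jointDist T μ0 Obs π Tx t s o xp x a)
      = ∑ s : S, ∑ o : (∀ i, Ω i), ∑ xp : (∀ i, Option (X i)),
          headD T μ0 Obs π Tx t s o xp := by
    intro t
    refine Finset.sum_congr rfl fun s _ => Finset.sum_congr rfl fun o _ =>
      Finset.sum_congr rfl fun xp _ => ?_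
    simp_rw [jointDist_eq_headD]
    exact sum_tail (π := π) (Tx := Tx) hπ_sum hTx_sum _ o xp
  intro t
  induction t with
  | zero =>
    rw [hhead 0]
    have h0 : ∀ s : S, (∑ o : (∀ i, Ω i), ∑ xp : (∀ i, Option (X i)),
        headD T μ0 Obs π Tx 0 s o xp) = μ0 s := by
      intro s
      have : ∀ (o : ∀ i, Ω i) (xp : ∀ i, Option (X i)), headD T μ0 Obs π Tx 0 s o xp
          = μ0 s * (if (∀ i, o i = Obs i s none) ∧ xp = (fun _ => none) then (1:ℝ) else 0) :=
        fun o xp => rfl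
      simp_rw [this, ← Finset.mul_sum]
      rw [sum_ind]; exact mul_one _
    simp_rw [h0]; exact hμ0_sum
  | succ t ih =>
    rw [hhead (t+1)]
    set F : (S × (∀ i, Ω i) × (∀ i, Option (X i))) →
        (S × (∀ i, Ω i) × (∀ i, Option (X i)) × (∀ i, X i) × (∀ i, A i)) → ℝ :=
      fun w q =>
        jointDist T μ0 Obs π Tx t q.1 q.2.1 q.2.2.1 q.2.2.2.1 q.2.2.2.2 *
          T q.1 q.2.2.2.2 w.1 *
          (if (∀ i, w.2.1 i = Obs i w.1 (some q.2.2.2.2)) ∧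
              w.2.2 = (fun i => some (q.2.2.2.1 i)) then (1:ℝ) else 0) with hF
    calc ∑ s : S, ∑ o : (∀ i, Ω i), ∑ xp : (∀ i, Option (X i)),
          headD T μ0 Obs π Tx (t+1) s o xp
        = ∑ w : S × (∀ i, Ω i) × (∀ i, Option (X i)),
            headD T μ0 Obs π Tx (t+1) w.1 w.2.1 w.2.2 :=
          (pack3 (fun s o xp => headD T μ0 Obs π Tx (t+1) s o xp)).symm
      _ = ∑ w : S × (∀ i, Ω i) × (∀ i, Option (X i)),
            ∑ q : S × (∀ i, Ω i) × (∀ i, Option (X i)) × (∀ i, X i) × (∀ i, A i),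
              F w q := by
          refine Finset.sum_congr rfl fun w _ => ?_
          exact (pack5 (fun s o xp x a => jointDist T μ0 Obs π Tx t s o xp x a *
            T s a w.1 * (if (∀ i, w.2.1 i = Obs i w.1 (some a)) ∧
              w.2.2 = (fun i => some (x i)) then (1:ℝ) else 0))).symm
      _ = ∑ q : S × (∀ i, Ω i) × (∀ i, Option (X i)) × (∀ i, X i) × (∀ i, A i),
            ∑ w : S × (∀ i, Ω i) × (∀ i, Option (X i)), F w q := Finset.sum_comm
      _ = ∑ q : S × (∀ i, Ω i) × (∀ i, Option (X i)) × (∀ i, X i) × (∀ i, A i),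
            jointDist T μ0 Obs π Tx t q.1 q.2.1 q.2.2.1 q.2.2.2.1 q.2.2.2.2 := by
          refine Finset.sum_congr rfl fun q _ => ?_
          rw [pack3 (fun s' o' xp' => F (s', o', xp') q)]
          have hinner : ∀ s' : S, (∑ o' : (∀ i, Ω i), ∑ xp' : (∀ i, Option (X i)),
              F (s', o', xp') q)
              = jointDist T μ0 Obs π Tx t q.1 q.2.1 q.2.2.1 q.2.2.2.1 q.2.2.2.2 *
                  T q.1 q.2.2.2.2 s' := by
            intro s'
            simp only [hF]
            simp_rw [← Finset.mul_sum]
            rw [sum_ind (fun i => Obs i s' (some q.2.2.2.2)) (fun i => some (q.2.2.2.1 i))]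
            exact mul_one _
          simp_rw [hinner, ← Finset.mul_sum,
            hT_sum q.1 q.2.2.2.2, mul_one]
      _ = 1 := by rw [pack5]; exact ih
/-- π-and-Tx occupancy inner sums. -/
noncomputable def P4 (t : ℕ) (i : Fin n) (o : Ω i) (a : A i) (x : X i)
    (xp : Option (X i)) : ℝ :=
  ∑ s : S, ∑ oj : (∀ j, Ω j), ∑ xpj : (∀ j, Option (X j)), ∑ xj : (∀ j, X j),
    ∑ aj : (∀ j, A j),
      if oj i = o ∧ aj i = a ∧ xj i = x ∧ xpj i = xp
        then jointDist T μ0 Obs π Tx t s oj xpj xj aj else 0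

noncomputable def P3 (t : ℕ) (i : Fin n) (o : Ω i) (x : X i) (xp : Option (X i)) : ℝ :=
  ∑ s : S, ∑ oj : (∀ j, Ω j), ∑ xpj : (∀ j, Option (X j)), ∑ xj : (∀ j, X j),
    ∑ aj : (∀ j, A j),
      if oj i = o ∧ xj i = x ∧ xpj i = xp
        then jointDist T μ0 Obs π Tx t s oj xpj xj aj else 0

noncomputable def P2 (t : ℕ) (i : Fin n) (o : Ω i) (xp : Option (X i)) : ℝ :=
  ∑ s : S, ∑ oj : (∀ j, Ω j), ∑ xpj : (∀ j, Option (X j)), ∑ xj : (∀ j, X j),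
    ∑ aj : (∀ j, A j),
      if oj i = o ∧ xpj i = xp
        then jointDist T μ0 Obs π Tx t s oj xpj xj aj else 0

lemma occAMM_eq_tsum (γ : ℝ) (i : Fin n) (o : Ω i) (a : A i) (x : X i)
    (xp : Option (X i)) :
    occAMM T μ0 Obs γ π Tx i o a x xp
      = ∑' t : ℕ, γ ^ t * P4 T μ0 Obs π Tx t i o a x xp := rfl

lemma L_a (hπ_sum : ∀ i o x, ∑ a : A i, π i o x a = 1)
    (t : ℕ) (s : S) (oj : ∀ j, Ω j) (xpj : ∀ j, Option (X j))
    (i : Fin n) (x : X i) (a : A i) :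
    (∑ xj : (∀ j, X j), ∑ aj : (∀ j, A j),
        if xj i = x ∧ aj i = a then jointDist T μ0 Obs π Tx t s oj xpj xj aj else 0)
      = π i (oj i) x a *
        ∑ xj : (∀ j, X j), ∑ aj : (∀ j, A j),
          (if xj i = x then jointDist T μ0 Obs π Tx t s oj xpj xj aj else 0) := by
  simp_rw [jointDist_eq_headD]
  have lhs_inner : ∀ xj : (∀ j, X j),
      (∑ aj : (∀ j, A j), if xj i = x ∧ aj i = a
          then headD T μ0 Obs π Tx t s oj xpj *
            ((∏ j, Tx j (oj j) (xpj j) (xj j)) * ∏ j, π j (oj j) (xj j) (aj j)) else 0)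
      = if xj i = x
          then (headD T μ0 Obs π Tx t s oj xpj * ∏ j, Tx j (oj j) (xpj j) (xj j)) *
            π i (oj i) (xj i) a else 0 := by
    intro xj
    by_cases h3 : xj i = x
    · simp only [h3, true_and, if_true]
      have step : ∀ aj : (∀ j, A j),
          (if aj i = a then headD T μ0 Obs π Tx t s oj xpj *
              ((∏ j, Tx j (oj j) (xpj j) (xj j)) * ∏ j, π j (oj j) (xj j) (aj j)) else 0)
          = (headD T μ0 Obs π Tx t s oj xpj * ∏ j, Tx j (oj j) (xpj j) (xj j)) *
              (if aj i = a then ∏ j, π j (oj j) (xj j) (aj j) else 0) := by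
        intro aj; split <;> ring
      simp_rw [step, ← Finset.mul_sum]
      rw [sum_pi_ite (fun j => π j (oj j) (xj j)) (fun j => hπ_sum j _ _) i a, h3]
    · simp [h3]
  have rhs_inner : ∀ xj : (∀ j, X j),
      (∑ aj : (∀ j, A j), if xj i = x
          then headD T μ0 Obs π Tx t s oj xpj *
            ((∏ j, Tx j (oj j) (xpj j) (xj j)) * ∏ j, π j (oj j) (xj j) (aj j)) else 0)
      = if xj i = x
          then headD T μ0 Obs π Tx t s oj xpj * ∏ j, Tx j (oj j) (xpj j) (xj j) else 0 := by
    intro xj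
    by_cases h3 : xj i = x
    · simp only [h3, if_true]
      simp_rw [← mul_assoc, ← Finset.mul_sum]
      rw [sum_pi_prod (fun j => π j (oj j) (xj j)),
        Finset.prod_eq_one fun j _ => hπ_sum j _ _, mul_one]
    · simp [h3]
  simp_rw [lhs_inner, rhs_inner, Finset.mul_sum]
  refine Finset.sum_congr rfl fun xj _ => ?_
  by_cases h3 : xj i = x
  · rw [if_pos h3, if_pos h3, h3]; ring
  · simp [h3]

lemma L_x (hπ_sum : ∀ i o x, ∑ a : A i, π i o x a = 1)
    (hTx_sum : ∀ i o xp, ∑ x : X i, Tx i o xp x = 1)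
    (t : ℕ) (s : S) (oj : ∀ j, Ω j) (xpj : ∀ j, Option (X j))
    (i : Fin n) (x : X i) :
    (∑ xj : (∀ j, X j), ∑ aj : (∀ j, A j),
        if xj i = x then jointDist T μ0 Obs π Tx t s oj xpj xj aj else 0)
      = Tx i (oj i) (xpj i) x *
        ∑ xj : (∀ j, X j), ∑ aj : (∀ j, A j), jointDist T μ0 Obs π Tx t s oj xpj xj aj := by
  simp_rw [jointDist_eq_headD]
  have h1 : ∀ xj : (∀ j, X j),
      (∑ aj : (∀ j, A j), headD T μ0 Obs π Tx t s oj xpj *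
          ((∏ j, Tx j (oj j) (xpj j) (xj j)) * ∏ j, π j (oj j) (xj j) (aj j)))
      = headD T μ0 Obs π Tx t s oj xpj * ∏ j, Tx j (oj j) (xpj j) (xj j) := by
    intro xj
    simp_rw [← mul_assoc, ← Finset.mul_sum]
    rw [sum_pi_prod (fun j => π j (oj j) (xj j)),
      Finset.prod_eq_one fun j _ => hπ_sum j _ _, mul_one]
  have h2 : ∀ xj : (∀ j, X j),
      (∑ aj : (∀ j, A j), if xj i = x
          then headD T μ0 Obs π Tx t s oj xpj *
            ((∏ j, Tx j (oj j) (xpj j) (xj j)) * ∏ j, π j (oj j) (xj j) (aj j)) else 0)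
      = if xj i = x
          then headD T μ0 Obs π Tx t s oj xpj * ∏ j, Tx j (oj j) (xpj j) (xj j) else 0 := by
    intro xj
    by_cases h3 : xj i = x
    · rw [if_pos h3, ← h1 xj]
      exact Finset.sum_congr rfl fun aj _ => if_pos h3
    · simp [h3]
  simp_rw [h2, h1]
  have step : ∀ xj : (∀ j, X j),
      (if xj i = x
        then headD T μ0 Obs π Tx t s oj xpj * ∏ j, Tx j (oj j) (xpj j) (xj j) else 0)
      = headD T μ0 Obs π Tx t s oj xpj *
          (if xj i = x then ∏ j, Tx j (oj j) (xpj j) (xj j) else 0) := by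
    intro xj; split <;> ring
  simp_rw [step, ← Finset.mul_sum]
  rw [sum_pi_ite (fun j => Tx j (oj j) (xpj j)) (fun j => hTx_sum j _ _) i x,
    sum_pi_prod (fun j => Tx j (oj j) (xpj j)),
    Finset.prod_eq_one fun j _ => hTx_sum j _ _, mul_one]
  ring
lemma P4_regroup (t : ℕ) (i : Fin n) (o : Ω i) (a : A i) (x : X i) (xp : Option (X i)) :
    P4 T μ0 Obs π Tx t i o a x xp
      = ∑ s : S, ∑ oj : (∀ j, Ω j), ∑ xpj : (∀ j, Option (X j)),
          if oj i = o ∧ xpj i = xp then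
            (∑ xj : (∀ j, X j), ∑ aj : (∀ j, A j),
              if xj i = x ∧ aj i = a then jointDist T μ0 Obs π Tx t s oj xpj xj aj else 0)
          else 0 := by
  refine Finset.sum_congr rfl fun s _ => Finset.sum_congr rfl fun oj _ =>
    Finset.sum_congr rfl fun xpj _ => ?_
  by_cases h : oj i = o ∧ xpj i = xp
  · rw [if_pos h]
    refine Finset.sum_congr rfl fun xj _ => Finset.sum_congr rfl fun aj _ => ?_
    by_cases h3 : xj i = x <;> by_cases h4 : aj i = a <;> simp [h.1, h.2, h3, h4]
  · rw [if_neg h]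
    refine Finset.sum_eq_zero fun xj _ => Finset.sum_eq_zero fun aj _ => ?_
    rw [if_neg]; tauto

lemma P3_regroup (t : ℕ) (i : Fin n) (o : Ω i) (x : X i) (xp : Option (X i)) :
    P3 T μ0 Obs π Tx t i o x xp
      = ∑ s : S, ∑ oj : (∀ j, Ω j), ∑ xpj : (∀ j, Option (X j)),
          if oj i = o ∧ xpj i = xp then
            (∑ xj : (∀ j, X j), ∑ aj : (∀ j, A j),
              if xj i = x then jointDist T μ0 Obs π Tx t s oj xpj xj aj else 0)
          else 0 := by
  refine Finset.sum_congr rfl fun s _ => Finset.sum_congr rfl fun oj _ =>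
    Finset.sum_congr rfl fun xpj _ => ?_
  by_cases h : oj i = o ∧ xpj i = xp
  · rw [if_pos h]
    refine Finset.sum_congr rfl fun xj _ => Finset.sum_congr rfl fun aj _ => ?_
    by_cases h3 : xj i = x <;> simp [h.1, h.2, h3]
  · rw [if_neg h]
    refine Finset.sum_eq_zero fun xj _ => Finset.sum_eq_zero fun aj _ => ?_
    rw [if_neg]; tauto

lemma P2_regroup (t : ℕ) (i : Fin n) (o : Ω i) (xp : Option (X i)) :
    P2 T μ0 Obs π Tx t i o xp
      = ∑ s : S, ∑ oj : (∀ j, Ω j), ∑ xpj : (∀ j, Option (X j)),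
          if oj i = o ∧ xpj i = xp then
            (∑ xj : (∀ j, X j), ∑ aj : (∀ j, A j),
              jointDist T μ0 Obs π Tx t s oj xpj xj aj)
          else 0 := by
  refine Finset.sum_congr rfl fun s _ => Finset.sum_congr rfl fun oj _ =>
    Finset.sum_congr rfl fun xpj _ => ?_
  by_cases h : oj i = o ∧ xpj i = xp
  · rw [if_pos h]
    exact Finset.sum_congr rfl fun xj _ => Finset.sum_congr rfl fun aj _ => if_pos h
  · rw [if_neg h]
    refine Finset.sum_eq_zero fun xj _ => Finset.sum_eq_zero fun aj _ => ?_
    rw [if_neg]; tauto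

lemma P4_eq (hπ_sum : ∀ i o x, ∑ a : A i, π i o x a = 1)
    (t : ℕ) (i : Fin n) (o : Ω i) (a : A i) (x : X i) (xp : Option (X i)) :
    P4 T μ0 Obs π Tx t i o a x xp = π i o x a * P3 T μ0 Obs π Tx t i o x xp := by
  rw [P4_regroup, P3_regroup, Finset.mul_sum]
  refine Finset.sum_congr rfl fun s _ => ?_
  rw [Finset.mul_sum]
  refine Finset.sum_congr rfl fun oj _ => ?_
  rw [Finset.mul_sum]
  refine Finset.sum_congr rfl fun xpj _ => ?_
  by_cases h : oj i = o ∧ xpj i = xp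
  · rw [if_pos h, if_pos h, L_a T μ0 Obs π Tx hπ_sum, h.1]
  · simp [h]

lemma P3_eq (hπ_sum : ∀ i o x, ∑ a : A i, π i o x a = 1)
    (hTx_sum : ∀ i o xp, ∑ x : X i, Tx i o xp x = 1)
    (t : ℕ) (i : Fin n) (o : Ω i) (x : X i) (xp : Option (X i)) :
    P3 T μ0 Obs π Tx t i o x xp = Tx i o xp x * P2 T μ0 Obs π Tx t i o xp := by
  rw [P3_regroup, P2_regroup, Finset.mul_sum]
  refine Finset.sum_congr rfl fun s _ => ?_
  rw [Finset.mul_sum]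
  refine Finset.sum_congr rfl fun oj _ => ?_
  rw [Finset.mul_sum]
  refine Finset.sum_congr rfl fun xpj _ => ?_
  by_cases h : oj i = o ∧ xpj i = xp
  · rw [if_pos h, if_pos h, L_x T μ0 Obs π Tx hπ_sum hTx_sum, h.1, h.2]
  · simp [h]

lemma sum_a_P4 (hπ_sum : ∀ i o x, ∑ a : A i, π i o x a = 1)
    (t : ℕ) (i : Fin n) (o : Ω i) (x : X i) (xp : Option (X i)) :
    ∑ a : A i, P4 T μ0 Obs π Tx t i o a x xp = P3 T μ0 Obs π Tx t i o x xp := by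
  simp_rw [P4_eq T μ0 Obs π Tx hπ_sum]
  rw [← Finset.sum_mul, hπ_sum, one_mul]

lemma sum_x_P3 (hπ_sum : ∀ i o x, ∑ a : A i, π i o x a = 1)
    (hTx_sum : ∀ i o xp, ∑ x : X i, Tx i o xp x = 1)
    (t : ℕ) (i : Fin n) (o : Ω i) (xp : Option (X i)) :
    ∑ x : X i, P3 T μ0 Obs π Tx t i o x xp = P2 T μ0 Obs π Tx t i o xp := by
  simp_rw [P3_eq T μ0 Obs π Tx hπ_sum hTx_sum]
  rw [← Finset.sum_mul, hTx_sum, one_mul]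

lemma P4_nonneg (hT : ∀ s a s', 0 ≤ T s a s') (hμ0 : ∀ s, 0 ≤ μ0 s)
    (hπ : ∀ i o x a, 0 ≤ π i o x a) (hTx : ∀ i o xp x, 0 ≤ Tx i o xp x)
    (t : ℕ) (i : Fin n) (o : Ω i) (a : A i) (x : X i) (xp : Option (X i)) :
    0 ≤ P4 T μ0 Obs π Tx t i o a x xp := by
  refine Finset.sum_nonneg fun s _ => Finset.sum_nonneg fun oj _ =>
    Finset.sum_nonneg fun xpj _ => Finset.sum_nonneg fun xj _ =>
    Finset.sum_nonneg fun aj _ => ?_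
  split
  · exact jointDist_nonneg T μ0 Obs π Tx hT hμ0 hπ hTx t s oj xpj xj aj
  · exact le_refl 0

lemma P4_le_one (hT : ∀ s a s', 0 ≤ T s a s') (hμ0 : ∀ s, 0 ≤ μ0 s)
    (hπ : ∀ i o x a, 0 ≤ π i o x a) (hTx : ∀ i o xp x, 0 ≤ Tx i o xp x)
    (hT_sum : ∀ s a, ∑ s' : S, T s a s' = 1) (hμ0_sum : ∑ s : S, μ0 s = 1)
    (hπ_sum : ∀ i o x, ∑ a : A i, π i o x a = 1)
    (hTx_sum : ∀ i o xp, ∑ x : X i, Tx i o xp x = 1)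
    (t : ℕ) (i : Fin n) (o : Ω i) (a : A i) (x : X i) (xp : Option (X i)) :
    P4 T μ0 Obs π Tx t i o a x xp ≤ 1 := by
  have hle : P4 T μ0 Obs π Tx t i o a x xp
      ≤ ∑ s : S, ∑ oj : (∀ j, Ω j), ∑ xpj : (∀ j, Option (X j)), ∑ xj : (∀ j, X j),
          ∑ aj : (∀ j, A j), jointDist T μ0 Obs π Tx t s oj xpj xj aj := by
    refine Finset.sum_le_sum fun s _ => Finset.sum_le_sum fun oj _ =>
      Finset.sum_le_sum fun xpj _ => Finset.sum_le_sum fun xj _ =>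
      Finset.sum_le_sum fun aj _ => ?_
    split
    · exact le_refl _
    · exact jointDist_nonneg T μ0 Obs π Tx hT hμ0 hπ hTx t s oj xpj xj aj
  calc P4 T μ0 Obs π Tx t i o a x xp ≤ _ := hle
    _ = 1 := jointDist_mass T μ0 Obs π Tx hT_sum hμ0_sum hπ_sum hTx_sum t

lemma summable_P4 (hT : ∀ s a s', 0 ≤ T s a s') (hμ0 : ∀ s, 0 ≤ μ0 s)
    (hπ : ∀ i o x a, 0 ≤ π i o x a) (hTx : ∀ i o xp x, 0 ≤ Tx i o xp x)
    (hT_sum : ∀ s a, ∑ s' : S, T s a s' = 1) (hμ0_sum : ∑ s : S, μ0 s = 1)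
    (hπ_sum : ∀ i o x, ∑ a : A i, π i o x a = 1)
    (hTx_sum : ∀ i o xp, ∑ x : X i, Tx i o xp x = 1)
    {γ : ℝ} (hγ0 : 0 ≤ γ) (hγ1 : γ < 1)
    (i : Fin n) (o : Ω i) (a : A i) (x : X i) (xp : Option (X i)) :
    Summable (fun t : ℕ => γ ^ t * P4 T μ0 Obs π Tx t i o a x xp) := by
  refine Summable.of_nonneg_of_le
    (fun t => mul_nonneg (pow_nonneg hγ0 t) (P4_nonneg T μ0 Obs π Tx hT hμ0 hπ hTx t i o a x xp))
    (fun t => mul_le_of_le_one_right (pow_nonneg hγ0 t)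
      (P4_le_one T μ0 Obs π Tx hT hμ0 hπ hTx hT_sum hμ0_sum hπ_sum hTx_sum t i o a x xp))
    (summable_geometric_of_lt_one hγ0 hγ1)
lemma rho_pi (hT : ∀ s a s', 0 ≤ T s a s') (hμ0 : ∀ s, 0 ≤ μ0 s)
    (hπ : ∀ i o x a, 0 ≤ π i o x a) (hTx : ∀ i o xp x, 0 ≤ Tx i o xp x)
    (hT_sum : ∀ s a, ∑ s' : S, T s a s' = 1) (hμ0_sum : ∑ s : S, μ0 s = 1)
    (hπ_sum : ∀ i o x, ∑ a : A i, π i o x a = 1)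
    (hTx_sum : ∀ i o xp, ∑ x : X i, Tx i o xp x = 1)
    {γ : ℝ} (hγ0 : 0 ≤ γ) (hγ1 : γ < 1)
    (i : Fin n) (o : Ω i) (a : A i) (x : X i) :
    ∑ xp : Option (X i), occAMM T μ0 Obs γ π Tx i o a x xp
      = π i o x a * ∑ a' : A i, ∑ xp : Option (X i), occAMM T μ0 Obs γ π Tx i o a' x xp := by
  have hS : ∀ (a : A i) (x : X i) (xp : Option (X i)),
      Summable (fun t : ℕ => γ ^ t * P4 T μ0 Obs π Tx t i o a x xp) := fun a x xp =>
    summable_P4 T μ0 Obs π Tx hT hμ0 hπ hTx hT_sum hμ0_sum hπ_sum hTx_sum hγ0 hγ1 i o a x xp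
  simp_rw [occAMM_eq_tsum]
  rw [← Summable.tsum_finsetSum (fun xp _ => hS a x xp)]
  have hR : (∑ a' : A i, ∑ xp : Option (X i),
        ∑' t : ℕ, γ ^ t * P4 T μ0 Obs π Tx t i o a' x xp)
      = ∑' t : ℕ, ∑ a' : A i, ∑ xp : Option (X i), γ ^ t * P4 T μ0 Obs π Tx t i o a' x xp := by
    calc (∑ a' : A i, ∑ xp : Option (X i), ∑' t : ℕ, γ ^ t * P4 T μ0 Obs π Tx t i o a' x xp)
        = ∑ a' : A i, ∑' t : ℕ, ∑ xp : Option (X i), γ ^ t * P4 T μ0 Obs π Tx t i o a' x xp :=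
          Finset.sum_congr rfl fun a' _ => (Summable.tsum_finsetSum (fun xp _ => hS a' x xp)).symm
      _ = _ := (Summable.tsum_finsetSum (fun a' _ => summable_sum (fun xp _ => hS a' x xp))).symm
  rw [hR, ← tsum_mul_left]
  refine tsum_congr fun t => ?_
  have e1 : (∑ xp : Option (X i), γ ^ t * P4 T μ0 Obs π Tx t i o a x xp)
      = γ ^ t * (π i o x a * ∑ xp : Option (X i), P3 T μ0 Obs π Tx t i o x xp) := by
    simp_rw [P4_eq T μ0 Obs π Tx hπ_sum, ← Finset.mul_sum]
  have e2 : (∑ a' : A i, ∑ xp : Option (X i), γ ^ t * P4 T μ0 Obs π Tx t i o a' x xp)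
      = γ ^ t * ∑ xp : Option (X i), P3 T μ0 Obs π Tx t i o x xp := by
    simp_rw [← Finset.mul_sum]
    rw [Finset.sum_comm]
    simp_rw [sum_a_P4 T μ0 Obs π Tx hπ_sum]
  rw [e1, e2]; ring

lemma rho_tx (hT : ∀ s a s', 0 ≤ T s a s') (hμ0 : ∀ s, 0 ≤ μ0 s)
    (hπ : ∀ i o x a, 0 ≤ π i o x a) (hTx : ∀ i o xp x, 0 ≤ Tx i o xp x)
    (hT_sum : ∀ s a, ∑ s' : S, T s a s' = 1) (hμ0_sum : ∑ s : S, μ0 s = 1)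
    (hπ_sum : ∀ i o x, ∑ a : A i, π i o x a = 1)
    (hTx_sum : ∀ i o xp, ∑ x : X i, Tx i o xp x = 1)
    {γ : ℝ} (hγ0 : 0 ≤ γ) (hγ1 : γ < 1)
    (i : Fin n) (o : Ω i) (x : X i) (xp : Option (X i)) :
    ∑ a : A i, occAMM T μ0 Obs γ π Tx i o a x xp
      = Tx i o xp x * ∑ a : A i, ∑ x' : X i, occAMM T μ0 Obs γ π Tx i o a x' xp := by
  have hS : ∀ (a : A i) (x : X i),
      Summable (fun t : ℕ => γ ^ t * P4 T μ0 Obs π Tx t i o a x xp) := fun a x =>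
    summable_P4 T μ0 Obs π Tx hT hμ0 hπ hTx hT_sum hμ0_sum hπ_sum hTx_sum hγ0 hγ1 i o a x xp
  simp_rw [occAMM_eq_tsum]
  rw [← Summable.tsum_finsetSum (fun a _ => hS a x)]
  have hR : (∑ a : A i, ∑ x' : X i,
        ∑' t : ℕ, γ ^ t * P4 T μ0 Obs π Tx t i o a x' xp)
      = ∑' t : ℕ, ∑ a : A i, ∑ x' : X i, γ ^ t * P4 T μ0 Obs π Tx t i o a x' xp := by
    calc (∑ a : A i, ∑ x' : X i, ∑' t : ℕ, γ ^ t * P4 T μ0 Obs π Tx t i o a x' xp)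
        = ∑ a : A i, ∑' t : ℕ, ∑ x' : X i, γ ^ t * P4 T μ0 Obs π Tx t i o a x' xp :=
          Finset.sum_congr rfl fun a _ => (Summable.tsum_finsetSum (fun x' _ => hS a x')).symm
      _ = _ := (Summable.tsum_finsetSum (fun a _ => summable_sum (fun x' _ => hS a x'))).symm
  rw [hR, ← tsum_mul_left]
  refine tsum_congr fun t => ?_
  have e1 : (∑ a : A i, γ ^ t * P4 T μ0 Obs π Tx t i o a x xp)
      = γ ^ t * (Tx i o xp x * P2 T μ0 Obs π Tx t i o xp) := by
    rw [← Finset.mul_sum, sum_a_P4 T μ0 Obs π Tx hπ_sum,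
      P3_eq T μ0 Obs π Tx hπ_sum hTx_sum]
  have e2 : (∑ a : A i, ∑ x' : X i, γ ^ t * P4 T μ0 Obs π Tx t i o a x' xp)
      = γ ^ t * P2 T μ0 Obs π Tx t i o xp := by
    simp_rw [← Finset.mul_sum]
    rw [Finset.sum_comm]
    simp_rw [sum_a_P4 T μ0 Obs π Tx hπ_sum]
    rw [sum_x_P3 T μ0 Obs π Tx hπ_sum hTx_sum]
  rw [e1, e2]; ring
end Aux

/-- **equivalence of the factored objective, Eq. 4.**
Let `f : ℝ → ℝ` satisfy `f(1) = 0` and `f(u) > 0` for `u ≠ 1`, let the expert joint model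
`N_E = (π_E, Tx_E)` have strictly positive AMM-occupancy measures `ρ_{E,i}`, and let
`N = (π, Tx)` be a joint model whose AMM-occupancy marginals `ρ_i(o,x⁻)` and `ρ_i(o,x)`
are strictly positive. With the π-occupancy measures `ρ_i(o,a,x) = ∑_{x⁻} ρ_i(o,a,x,x⁻)`
and Tx-occupancy measures `ρ_i(o,x,x⁻) = ∑_a ρ_i(o,a,x,x⁻)`, the factored objective
`∑_i [∑_{o,a,x} ρ_{E,i}(o,a,x)·f(ρ_i(o,a,x)/ρ_{E,i}(o,a,x))
  + ∑_{o,x,x⁻} ρ_{E,i}(o,x,x⁻)·f(ρ_i(o,x,x⁻)/ρ_{E,i}(o,x,x⁻))]`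
is nonnegative and equals `0` iff `π_i = π_{E,i}` and `Tx_i = Tx_{E,i}` for all `i`:
the factored and unfactored objectives have the same exact minimizers, namely `N_E`. -/
theorem factored_objective_equivalence
    {n : ℕ} {S : Type} {A : Fin n → Type} {Ω : Fin n → Type} {X : Fin n → Type}
    [Fintype S] [Nonempty S]
    [∀ i, Fintype (A i)] [∀ i, Nonempty (A i)]
    [∀ i, Fintype (Ω i)] [∀ i, Nonempty (Ω i)]
    [∀ i, Fintype (X i)] [∀ i, Nonempty (X i)]
    (T : S → (∀ i, A i) → S → ℝ) (μ0 : S → ℝ)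
    (Obs : ∀ i, S → Option (∀ j, A j) → Ω i) (γ : ℝ)
    (f : ℝ → ℝ) (hf1 : f 1 = 0) (hfpos : ∀ u : ℝ, u ≠ 1 → 0 < f u)
    (πE : ∀ i, Ω i → X i → A i → ℝ)
    (TxE : ∀ i, Ω i → Option (X i) → X i → ℝ)
    (π : ∀ i, Ω i → X i → A i → ℝ)
    (Tx : ∀ i, Ω i → Option (X i) → X i → ℝ)
    (hT_nonneg : ∀ s a s', 0 ≤ T s a s') (hT_sum : ∀ s a, ∑ s' : S, T s a s' = 1)
    (hμ0_nonneg : ∀ s, 0 ≤ μ0 s) (hμ0_sum : ∑ s : S, μ0 s = 1)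
    (hγ0 : 0 < γ) (hγ1 : γ < 1)
    (hπE_nonneg : ∀ i o x a, 0 ≤ πE i o x a)
    (hπE_sum : ∀ i o x, ∑ a : A i, πE i o x a = 1)
    (hTxE_nonneg : ∀ i o xp x, 0 ≤ TxE i o xp x)
    (hTxE_sum : ∀ i o xp, ∑ x : X i, TxE i o xp x = 1)
    (hπ_nonneg : ∀ i o x a, 0 ≤ π i o x a)
    (hπ_sum : ∀ i o x, ∑ a : A i, π i o x a = 1)
    (hTx_nonneg : ∀ i o xp x, 0 ≤ Tx i o xp x)
    (hTx_sum : ∀ i o xp, ∑ x : X i, Tx i o xp x = 1)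
    (hρE_pos : ∀ (i : Fin n) (o : Ω i) (a : A i) (x : X i) (xp : Option (X i)),
      0 < occAMM T μ0 Obs γ πE TxE i o a x xp)
    (hpos_oxp : ∀ (i : Fin n) (o : Ω i) (xp : Option (X i)),
      0 < ∑ a : A i, ∑ x : X i, occAMM T μ0 Obs γ π Tx i o a x xp)
    (hpos_ox : ∀ (i : Fin n) (o : Ω i) (x : X i),
      0 < ∑ a : A i, ∑ xp : Option (X i), occAMM T μ0 Obs γ π Tx i o a x xp) :
    (0 ≤ ∑ i : Fin n,
        ((∑ o : Ω i, ∑ a : A i, ∑ x : X i,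
          (∑ xp : Option (X i), occAMM T μ0 Obs γ πE TxE i o a x xp) *
            f ((∑ xp : Option (X i), occAMM T μ0 Obs γ π Tx i o a x xp) /
                (∑ xp : Option (X i), occAMM T μ0 Obs γ πE TxE i o a x xp))) +
        (∑ o : Ω i, ∑ x : X i, ∑ xp : Option (X i),
          (∑ a : A i, occAMM T μ0 Obs γ πE TxE i o a x xp) *
            f ((∑ a : A i, occAMM T μ0 Obs γ π Tx i o a x xp) /
                (∑ a : A i, occAMM T μ0 Obs γ πE TxE i o a x xp))))) ∧
    ((∑ i : Fin n,
        ((∑ o : Ω i, ∑ a : A i, ∑ x : X i,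
          (∑ xp : Option (X i), occAMM T μ0 Obs γ πE TxE i o a x xp) *
            f ((∑ xp : Option (X i), occAMM T μ0 Obs γ π Tx i o a x xp) /
                (∑ xp : Option (X i), occAMM T μ0 Obs γ πE TxE i o a x xp))) +
        (∑ o : Ω i, ∑ x : X i, ∑ xp : Option (X i),
          (∑ a : A i, occAMM T μ0 Obs γ πE TxE i o a x xp) *
            f ((∑ a : A i, occAMM T μ0 Obs γ π Tx i o a x xp) /
                (∑ a : A i, occAMM T μ0 Obs γ πE TxE i o a x xp)))))
        = 0
      ↔ (∀ i : Fin n, π i = πE i ∧ Tx i = TxE i)) := by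
  classical
  have hγ0' : (0:ℝ) ≤ γ := hγ0.le
  have hf_nonneg : ∀ u : ℝ, 0 ≤ f u := by
    intro u
    by_cases h : u = 1
    · rw [h, hf1]
    · exact (hfpos u h).le
  have hEρπ : ∀ (i : Fin n) (o : Ω i) (a : A i) (x : X i),
      0 < ∑ xp : Option (X i), occAMM T μ0 Obs γ πE TxE i o a x xp := fun i o a x =>
    Finset.sum_pos (fun xp _ => hρE_pos i o a x xp) Finset.univ_nonempty
  have hEρtx : ∀ (i : Fin n) (o : Ω i) (x : X i) (xp : Option (X i)),
      0 < ∑ a : A i, occAMM T μ0 Obs γ πE TxE i o a x xp := fun i o x xp =>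
    Finset.sum_pos (fun a _ => hρE_pos i o a x xp) Finset.univ_nonempty
  have hterm1 : ∀ (i : Fin n) (o : Ω i) (a : A i) (x : X i),
      0 ≤ (∑ xp : Option (X i), occAMM T μ0 Obs γ πE TxE i o a x xp) *
        f ((∑ xp : Option (X i), occAMM T μ0 Obs γ π Tx i o a x xp) /
            (∑ xp : Option (X i), occAMM T μ0 Obs γ πE TxE i o a x xp)) := fun i o a x =>
    mul_nonneg (hEρπ i o a x).le (hf_nonneg _)
  have hterm2 : ∀ (i : Fin n) (o : Ω i) (x : X i) (xp : Option (X i)),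
      0 ≤ (∑ a : A i, occAMM T μ0 Obs γ πE TxE i o a x xp) *
        f ((∑ a : A i, occAMM T μ0 Obs γ π Tx i o a x xp) /
            (∑ a : A i, occAMM T μ0 Obs γ πE TxE i o a x xp)) := fun i o x xp =>
    mul_nonneg (hEρtx i o x xp).le (hf_nonneg _)
  have hA_nonneg : ∀ i : Fin n, 0 ≤ ∑ o : Ω i, ∑ a : A i, ∑ x : X i,
      (∑ xp : Option (X i), occAMM T μ0 Obs γ πE TxE i o a x xp) *
        f ((∑ xp : Option (X i), occAMM T μ0 Obs γ π Tx i o a x xp) /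
            (∑ xp : Option (X i), occAMM T μ0 Obs γ πE TxE i o a x xp)) := fun i =>
    Finset.sum_nonneg fun o _ => Finset.sum_nonneg fun a _ =>
      Finset.sum_nonneg fun x _ => hterm1 i o a x
  have hB_nonneg : ∀ i : Fin n, 0 ≤ ∑ o : Ω i, ∑ x : X i, ∑ xp : Option (X i),
      (∑ a : A i, occAMM T μ0 Obs γ πE TxE i o a x xp) *
        f ((∑ a : A i, occAMM T μ0 Obs γ π Tx i o a x xp) /
            (∑ a : A i, occAMM T μ0 Obs γ πE TxE i o a x xp)) := fun i =>
    Finset.sum_nonneg fun o _ => Finset.sum_nonneg fun x _ =>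
      Finset.sum_nonneg fun xp _ => hterm2 i o x xp
  have htot_nonneg := Finset.sum_nonneg
    (fun i (_ : i ∈ (Finset.univ : Finset (Fin n))) => add_nonneg (hA_nonneg i) (hB_nonneg i))
  refine ⟨htot_nonneg, ?_, ?_⟩
  · -- zero implies models equal
    intro h0
    intro i
    have hi := (Finset.sum_eq_zero_iff_of_nonneg
      (fun i _ => add_nonneg (hA_nonneg i) (hB_nonneg i))).mp h0 i (Finset.mem_univ i)
    obtain ⟨hA0, hB0⟩ := (add_eq_zero_iff_of_nonneg (hA_nonneg i) (hB_nonneg i)).mp hi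
    have hterm1eq : ∀ (o : Ω i) (a : A i) (x : X i),
        (∑ xp : Option (X i), occAMM T μ0 Obs γ π Tx i o a x xp)
          = ∑ xp : Option (X i), occAMM T μ0 Obs γ πE TxE i o a x xp := by
      intro o a x
      have h1 := (Finset.sum_eq_zero_iff_of_nonneg
        (fun o _ => Finset.sum_nonneg fun a _ => Finset.sum_nonneg fun x _ =>
          hterm1 i o a x)).mp hA0 o (Finset.mem_univ o)
      have h2 := (Finset.sum_eq_zero_iff_of_nonneg
        (fun a _ => Finset.sum_nonneg fun x _ => hterm1 i o a x)).mp h1 a (Finset.mem_univ a)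
      have h3 := (Finset.sum_eq_zero_iff_of_nonneg
        (fun x _ => hterm1 i o a x)).mp h2 x (Finset.mem_univ x)
      have hfz : f ((∑ xp : Option (X i), occAMM T μ0 Obs γ π Tx i o a x xp) /
          (∑ xp : Option (X i), occAMM T μ0 Obs γ πE TxE i o a x xp)) = 0 := by
        rcases mul_eq_zero.mp h3 with h | h
        · exact absurd h (ne_of_gt (hEρπ i o a x))
        · exact h
      have hr : (∑ xp : Option (X i), occAMM T μ0 Obs γ π Tx i o a x xp) /
          (∑ xp : Option (X i), occAMM T μ0 Obs γ πE TxE i o a x xp) = 1 := by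
        by_contra hne
        exact (hfpos _ hne).ne' hfz
      exact (div_eq_one_iff_eq (ne_of_gt (hEρπ i o a x))).mp hr
    have hterm2eq : ∀ (o : Ω i) (x : X i) (xp : Option (X i)),
        (∑ a : A i, occAMM T μ0 Obs γ π Tx i o a x xp)
          = ∑ a : A i, occAMM T μ0 Obs γ πE TxE i o a x xp := by
      intro o x xp
      have h1 := (Finset.sum_eq_zero_iff_of_nonneg
        (fun o _ => Finset.sum_nonneg fun x _ => Finset.sum_nonneg fun xp _ =>
          hterm2 i o x xp)).mp hB0 o (Finset.mem_univ o)
      have h2 := (Finset.sum_eq_zero_iff_of_nonneg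
        (fun x _ => Finset.sum_nonneg fun xp _ => hterm2 i o x xp)).mp h1 x (Finset.mem_univ x)
      have h3 := (Finset.sum_eq_zero_iff_of_nonneg
        (fun xp _ => hterm2 i o x xp)).mp h2 xp (Finset.mem_univ xp)
      have hfz : f ((∑ a : A i, occAMM T μ0 Obs γ π Tx i o a x xp) /
          (∑ a : A i, occAMM T μ0 Obs γ πE TxE i o a x xp)) = 0 := by
        rcases mul_eq_zero.mp h3 with h | h
        · exact absurd h (ne_of_gt (hEρtx i o x xp))
        · exact h
      have hr : (∑ a : A i, occAMM T μ0 Obs γ π Tx i o a x xp) /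
          (∑ a : A i, occAMM T μ0 Obs γ πE TxE i o a x xp) = 1 := by
        by_contra hne
        exact (hfpos _ hne).ne' hfz
      exact (div_eq_one_iff_eq (ne_of_gt (hEρtx i o x xp))).mp hr
    have hρox : ∀ (o : Ω i) (x : X i),
        (∑ a : A i, ∑ xp : Option (X i), occAMM T μ0 Obs γ π Tx i o a x xp)
          = ∑ a : A i, ∑ xp : Option (X i), occAMM T μ0 Obs γ πE TxE i o a x xp :=
      fun o x => Finset.sum_congr rfl fun a _ => hterm1eq o a x
    have hρoxp : ∀ (o : Ω i) (xp : Option (X i)),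
        (∑ a : A i, ∑ x : X i, occAMM T μ0 Obs γ π Tx i o a x xp)
          = ∑ a : A i, ∑ x : X i, occAMM T μ0 Obs γ πE TxE i o a x xp := by
      intro o xp
      calc (∑ a : A i, ∑ x : X i, occAMM T μ0 Obs γ π Tx i o a x xp)
          = ∑ x : X i, ∑ a : A i, occAMM T μ0 Obs γ π Tx i o a x xp := Finset.sum_comm
        _ = ∑ x : X i, ∑ a : A i, occAMM T μ0 Obs γ πE TxE i o a x xp :=
            Finset.sum_congr rfl fun x _ => hterm2eq o x xp
        _ = ∑ a : A i, ∑ x : X i, occAMM T μ0 Obs γ πE TxE i o a x xp := Finset.sum_comm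
    constructor
    · funext o x a
      have h1 := rho_pi T μ0 Obs π Tx hT_nonneg hμ0_nonneg hπ_nonneg hTx_nonneg
        hT_sum hμ0_sum hπ_sum hTx_sum hγ0' hγ1 i o a x
      have h2 := rho_pi T μ0 Obs πE TxE hT_nonneg hμ0_nonneg hπE_nonneg hTxE_nonneg
        hT_sum hμ0_sum hπE_sum hTxE_sum hγ0' hγ1 i o a x
      have key : π i o x a *
          (∑ a' : A i, ∑ xp : Option (X i), occAMM T μ0 Obs γ π Tx i o a' x xp)
          = πE i o x a *
          (∑ a' : A i, ∑ xp : Option (X i), occAMM T μ0 Obs γ π Tx i o a' x xp) := by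
        rw [← h1, hterm1eq o a x, h2, hρox o x]
      exact mul_right_cancel₀ (ne_of_gt (hpos_ox i o x)) key
    · funext o xp x
      have h1 := rho_tx T μ0 Obs π Tx hT_nonneg hμ0_nonneg hπ_nonneg hTx_nonneg
        hT_sum hμ0_sum hπ_sum hTx_sum hγ0' hγ1 i o x xp
      have h2 := rho_tx T μ0 Obs πE TxE hT_nonneg hμ0_nonneg hπE_nonneg hTxE_nonneg
        hT_sum hμ0_sum hπE_sum hTxE_sum hγ0' hγ1 i o x xp
      have key : Tx i o xp x *
          (∑ a : A i, ∑ x' : X i, occAMM T μ0 Obs γ π Tx i o a x' xp)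
          = TxE i o xp x *
          (∑ a : A i, ∑ x' : X i, occAMM T μ0 Obs γ π Tx i o a x' xp) := by
        rw [← h1, hterm2eq o x xp, h2, hρoxp o xp]
      exact mul_right_cancel₀ (ne_of_gt (hpos_oxp i o xp)) key
  · -- models equal implies zero
    intro h
    have hπeq : π = πE := funext fun i => (h i).1
    have hTxeq : Tx = TxE := funext fun i => (h i).2
    subst hπeq
    subst hTxeq
    refine Finset.sum_eq_zero fun i _ => ?_
    have z1 : (∑ o : Ω i, ∑ a : A i, ∑ x : X i,
        (∑ xp : Option (X i), occAMM T μ0 Obs γ π Tx i o a x xp) *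
          f ((∑ xp : Option (X i), occAMM T μ0 Obs γ π Tx i o a x xp) /
              (∑ xp : Option (X i), occAMM T μ0 Obs γ π Tx i o a x xp))) = 0 := by
      refine Finset.sum_eq_zero fun o _ => Finset.sum_eq_zero fun a _ =>
        Finset.sum_eq_zero fun x _ => ?_
      rw [div_self (ne_of_gt (hEρπ i o a x)), hf1, mul_zero]
    have z2 : (∑ o : Ω i, ∑ x : X i, ∑ xp : Option (X i),
        (∑ a : A i, occAMM T μ0 Obs γ π Tx i o a x xp) *
          f ((∑ a : A i, occAMM T μ0 Obs γ π Tx i o a x xp) /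
              (∑ a : A i, occAMM T μ0 Obs γ π Tx i o a x xp))) = 0 := by
      refine Finset.sum_eq_zero fun o _ => Finset.sum_eq_zero fun x _ =>
        Finset.sum_eq_zero fun xp _ => ?_
      rw [div_self (ne_of_gt (hEρtx i o x xp)), hf1, mul_zero]
    rw [z1, z2, add_zero]

end DecPOMDP
end

section
/- (Optimality of the posterior kernel in the E-step.) Let Y and Z be finite nonempty sets, let f : ℝ → ℝ be convex, let ρ : Z × Y → ℝ with ρ(z,y) > 0 for all (z,y), and let p : Y → ℝ with p(y) > 0 for all y. Define the posterior kernel q*(z|y) := ρ(z,y)/ρ_Y(y), where ρ_Y(y) := ∑_z ρ(z,y). Then: (i) D_f(ρ ‖ q*⊗p) = D_f(ρ_Y ‖ p), i.e. ∑_{z,y} q*(z|y)·p(y)·f( ρ(z,y)/(q*(z|y)·p(y)) ) = ∑_y p(y)·f( ρ_Y(y)/p(y) ); and (ii) for every strictly positive kernel q from Y to Z, D_f(ρ ‖ q⊗p) ≥ D_f(ρ ‖ q*⊗p). Hence q* minimizes q ↦ D_f(ρ ‖ q⊗p) over strictly positive kernels. -/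
/-! Marginalising over `Z` cannot increase an `f`-divergence: on each fibre `Z × {y}`, Jensen's
inequality with the weights `q(·|y)` bounds `p(y) f(ρ_Y(y)/p(y))` by
`∑_z q(z|y) p(y) f(ρ(z,y)/(q(z|y) p(y)))`. Hence `D_f(ρ ‖ q⊗p) ≥ D_f(ρ_Y ‖ p)` for every kernel `q`.
The posterior kernel attains this bound: it makes the ratio `ρ/(q*⊗p) = ρ_Y/p` constant on each
fibre, where Jensen's inequality is an equality. -/

open Finset

theorem ConvexOn.sum_mul_map_sum_div_le {ι : Type*} {f : ℝ → ℝ} (hf : ConvexOn ℝ Set.univ f)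
    (s : Finset ι) (w a : ι → ℝ) (hw : ∀ i ∈ s, 0 < w i) :
    (∑ i ∈ s, w i) * f ((∑ i ∈ s, a i) / ∑ i ∈ s, w i) ≤ ∑ i ∈ s, w i * f (a i / w i) := by
  rcases s.eq_empty_or_nonempty with rfl | hs
  · simp
  have hW : 0 < ∑ i ∈ s, w i := sum_pos hw hs
  have hjensen := hf.map_centerMass_le (fun i hi => (hw i hi).le) hW
    (fun i _ => Set.mem_univ (a i / w i))
  have hsum : ∑ i ∈ s, w i * (a i / w i) = ∑ i ∈ s, a i :=
    sum_congr rfl fun i hi => mul_div_cancel₀ _ (hw i hi).ne'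
  simp only [centerMass, smul_eq_mul, Function.comp_apply, hsum] at hjensen
  rwa [div_eq_inv_mul, ← le_inv_mul_iff₀ hW]

section FDiv

variable {Y Z : Type*} [Fintype Z]

noncomputable def fDiv {α : Type*} [Fintype α] (f : ℝ → ℝ) (ρ σ : α → ℝ) : ℝ :=
  ∑ x, σ x * f (ρ x / σ x)

noncomputable def marginal (ρ : Z × Y → ℝ) (y : Y) : ℝ :=
  ∑ z, ρ (z, y)

def kernelProd (q : Y → Z → ℝ) (p : Y → ℝ) : Z × Y → ℝ :=
  fun x => q x.2 x.1 * p x.2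

noncomputable def posterior (ρ : Z × Y → ℝ) (y : Y) (z : Z) : ℝ :=
  ρ (z, y) / marginal ρ y

theorem fDiv_marginal_le [Fintype Y] {f : ℝ → ℝ} (hf : ConvexOn ℝ Set.univ f) (ρ σ : Z × Y → ℝ)
    (hσ : ∀ x, 0 < σ x) : fDiv f (marginal ρ) (marginal σ) ≤ fDiv f ρ σ := by
  rw [fDiv, fDiv, Fintype.sum_prod_type_right]
  exact sum_le_sum fun y _ =>
    hf.sum_mul_map_sum_div_le univ (fun z => σ (z, y)) (fun z => ρ (z, y)) fun z _ => hσ _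

theorem fDiv_eq_fDiv_marginal [Fintype Y] (f : ℝ → ℝ) {ρ σ : Z × Y → ℝ}
    (h : ∀ z y, ρ (z, y) / σ (z, y) = marginal ρ y / marginal σ y) :
    fDiv f ρ σ = fDiv f (marginal ρ) (marginal σ) := by
  rw [fDiv, fDiv, Fintype.sum_prod_type_right]
  refine sum_congr rfl fun y _ => ?_
  simp only [h, marginal, ← sum_mul]

theorem marginal_pos [Nonempty Z] {ρ : Z × Y → ℝ} (hρ : ∀ x, 0 < ρ x) (y : Y) :
    0 < marginal ρ y :=
  sum_pos (fun z _ => hρ (z, y)) univ_nonempty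

theorem marginal_kernelProd {q : Y → Z → ℝ} (hq : ∀ y, ∑ z, q y z = 1) (p : Y → ℝ) :
    marginal (kernelProd q p) = p := by
  ext y
  simp only [marginal, kernelProd, ← sum_mul, hq, one_mul]

theorem sum_posterior {ρ : Z × Y → ℝ} {y : Y} (hy : marginal ρ y ≠ 0) :
    ∑ z, posterior ρ y z = 1 := by
  simp only [posterior, ← sum_div]
  exact div_self hy

theorem div_kernelProd_posterior {ρ : Z × Y → ℝ} (hρ : ∀ x, ρ x ≠ 0) (p : Y → ℝ) (x : Z × Y) :
    ρ x / kernelProd (posterior ρ) p x = marginal ρ x.2 / p x.2 := by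
  rw [kernelProd, posterior, div_mul_eq_mul_div, div_div_eq_mul_div, mul_div_mul_left _ _ (hρ x)]

theorem fDiv_kernelProd [Fintype Y] (f : ℝ → ℝ) (ρ : Z × Y → ℝ) (q : Y → Z → ℝ) (p : Y → ℝ) :
    fDiv f ρ (kernelProd q p) = ∑ z, ∑ y, q y z * p y * f (ρ (z, y) / (q y z * p y)) :=
  Fintype.sum_prod_type _

theorem fDiv_kernelProd_posterior [Fintype Y] (f : ℝ → ℝ) {ρ : Z × Y → ℝ}
    (hρY : ∀ y, marginal ρ y ≠ 0) (hρ : ∀ x, ρ x ≠ 0) (p : Y → ℝ) :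
    fDiv f ρ (kernelProd (posterior ρ) p) = fDiv f (marginal ρ) p := by
  have hmarg := marginal_kernelProd (fun y => sum_posterior (hρY y)) p
  have hratio : ∀ z y, ρ (z, y) / kernelProd (posterior ρ) p (z, y)
      = marginal ρ y / marginal (kernelProd (posterior ρ) p) y := fun z y => by
    rw [hmarg, div_kernelProd_posterior hρ]
  rw [fDiv_eq_fDiv_marginal f hratio, hmarg]

end FDiv

theorem posterior_kernel_optimal_general
    {Y Z : Type} [Fintype Y] [Fintype Z] [Nonempty Z]
    (f : ℝ → ℝ) (hf : ConvexOn ℝ Set.univ f)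
    (ρ : Z × Y → ℝ) (hρ : ∀ z y, 0 < ρ (z, y))
    (p : Y → ℝ) (hp : ∀ y, 0 < p y) :
    (∑ z : Z, ∑ y : Y,
        (ρ (z, y) / ∑ z' : Z, ρ (z', y)) * p y *
          f (ρ (z, y) / ((ρ (z, y) / ∑ z' : Z, ρ (z', y)) * p y))
      = ∑ y : Y, p y * f ((∑ z : Z, ρ (z, y)) / p y)) ∧
    (∀ q : Y → Z → ℝ, (∀ y z, 0 < q y z) → (∀ y, ∑ z : Z, q y z = 1) →
      ∑ z : Z, ∑ y : Y, q y z * p y * f (ρ (z, y) / (q y z * p y))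
        ≥ ∑ z : Z, ∑ y : Y,
            (ρ (z, y) / ∑ z' : Z, ρ (z', y)) * p y *
              f (ρ (z, y) / ((ρ (z, y) / ∑ z' : Z, ρ (z', y)) * p y))) := by
  have hρpos : ∀ x, 0 < ρ x := fun x => hρ x.1 x.2
  have hopt := fDiv_kernelProd_posterior f (fun y => (marginal_pos hρpos y).ne')
    (fun x => (hρpos x).ne') p
  have hle : ∀ q : Y → Z → ℝ, (∀ y z, 0 < q y z) → (∀ y, ∑ z, q y z = 1) →
      fDiv f ρ (kernelProd (posterior ρ) p) ≤ fDiv f ρ (kernelProd q p) := by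
    intro q hq hq1
    calc fDiv f ρ (kernelProd (posterior ρ) p)
        = fDiv f (marginal ρ) (marginal (kernelProd q p)) := by rw [hopt, marginal_kernelProd hq1]
      _ ≤ fDiv f ρ (kernelProd q p) := fDiv_marginal_le hf ρ _ fun x => mul_pos (hq _ _) (hp _)
  simp only [fDiv_kernelProd, posterior, marginal] at hopt hle
  exact ⟨hopt, hle⟩

/-- **optimality of the posterior kernel in the E-step.** Let `Y`, `Z` be
finite nonempty sets, `f : ℝ → ℝ` convex, `ρ : Z × Y → ℝ` strictly positive, `p : Y → ℝ`
strictly positive, and let `q*(z|y) := ρ(z,y)/ρ_Y(y)` with `ρ_Y(y) = ∑_z ρ(z,y)` be the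
posterior kernel. Then (i) `D_f(ρ ‖ q*⊗p) = D_f(ρ_Y ‖ p)`, and (ii) for every strictly
positive kernel `q` from `Y` to `Z`, `D_f(ρ ‖ q⊗p) ≥ D_f(ρ ‖ q*⊗p)`; hence `q*` minimizes
`q ↦ D_f(ρ ‖ q⊗p)` over strictly positive kernels. -/
theorem posterior_kernel_optimal
    {Y Z : Type} [Fintype Y] [Nonempty Y] [Fintype Z] [Nonempty Z]
    (f : ℝ → ℝ) (hf : ConvexOn ℝ Set.univ f)
    (ρ : Z × Y → ℝ) (hρ : ∀ z y, 0 < ρ (z, y))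
    (p : Y → ℝ) (hp : ∀ y, 0 < p y) :
    (∑ z : Z, ∑ y : Y,
        (ρ (z, y) / ∑ z' : Z, ρ (z', y)) * p y *
          f (ρ (z, y) / ((ρ (z, y) / ∑ z' : Z, ρ (z', y)) * p y))
      = ∑ y : Y, p y * f ((∑ z : Z, ρ (z, y)) / p y)) ∧
    (∀ q : Y → Z → ℝ, (∀ y z, 0 < q y z) → (∀ y, ∑ z : Z, q y z = 1) →
      ∑ z : Z, ∑ y : Y, q y z * p y * f (ρ (z, y) / (q y z * p y))
        ≥ ∑ z : Z, ∑ y : Y,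
            (ρ (z, y) / ∑ z' : Z, ρ (z', y)) * p y *
              f (ρ (z, y) / ((ρ (z, y) / ∑ z' : Z, ρ (z', y)) * p y))) :=
  posterior_kernel_optimal_general f hf ρ hρ p hp
end
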